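/- arXiv:1708.05540 — 10 statements merged into one kernel-verified Lean document; each statement's English description precedes it below -/
import Mathlib

section
/- Let (V₀,b₀,ρ₀) and (V₁,b₁,ρ₁) be bounded G-bilinear forms over the fraction field K of a discrete valuation ring O_K, such that the orthogonal direct sum V₀ ⊕ V₁(-1) is a neutral G-bilinear form over K. Let Λ₀ ⊆ V₀ and Λ₁ ⊆ V₁ be almost unimodular G-lattices. Then the orthogonal direct sum of the discriminant form of Λ₀ and of the (-1)-scaled discriminant form of Λ₁ is a neutral G-bilinear form over the residue field k. (Equivalently: the Witt class of the discriminant form of an almost unimodular G-lattice in V depends only on the Witt class of V.) -/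
open Submodule LinearMap Module

section Aux

variable {R : Type*} [CommRing R] [IsDomain R] [IsDiscreteValuationRing R]
variable {K : Type*} [Field K] [Algebra R K] [IsFractionRing R K]
variable {V : Type*} [AddCommGroup V] [Module K V] [Module R V] [IsScalarTower R K V]

/-- The dual lattice of `L` with respect to `B`. -/
def dualLat (B : LinearMap.BilinForm K V) (L : Submodule R V) : Submodule R V where
  carrier := {v | ∀ y ∈ L, B v y ∈ (algebraMap R K).range}
  add_mem' := by
    intro a b ha hb y hy
    obtain ⟨r, hr⟩ := ha y hy
    obtain ⟨s, hs⟩ := hb y hy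
    exact ⟨r + s, by simp [map_add, hr, hs]⟩
  zero_mem' := fun y hy => ⟨0, by simp⟩
  smul_mem' := by
    intro r v hv y hy
    obtain ⟨s, hs⟩ := hv y hy
    refine ⟨r * s, ?_⟩
    have h1 : r • v = (algebraMap R K r) • v := (algebraMap_smul K r v).symm
    simp only [Set.mem_setOf_eq] at *
    rw [h1, map_smul, LinearMap.smul_apply, smul_eq_mul, map_mul, hs]

theorem mem_dualLat {B : LinearMap.BilinForm K V} {L : Submodule R V} {v : V} :
    v ∈ dualLat B L ↔ ∀ y ∈ L, B v y ∈ (algebraMap R K).range := Iff.rfl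

theorem core [FiniteDimensional K V]
    (B : LinearMap.BilinForm K V)
    (hsymm : ∀ x y, B x y = B y x)
    (hnd : ∀ x, (∀ y, B x y = 0) → x = 0)
    (X : Submodule K V)
    (hX : ∀ v, v ∈ X ↔ ∀ x ∈ X, B v x = 0)
    (L : Submodule R V) (hfg : L.FG) (hspan : Submodule.span K (L : Set V) = ⊤)
    (v : V)
    (hv : ∀ m ∈ X.restrictScalars R ⊓ dualLat B L, B v m ∈ (algebraMap R K).range) :
    v ∈ X.restrictScalars R ⊔ L := by
  classical
  have hBX : ∀ x ∈ X, ∀ x' ∈ X, B x x' = 0 := fun x hx => (hX x).mp hx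
  -- torsion-free
  haveI : NoZeroSMulDivisors R (V ⧸ X) := by
    refine ⟨fun {c x} h => ?_⟩
    rcases eq_or_ne c 0 with h0 | h0
    · exact Or.inl h0
    · right
      have h1 : (algebraMap R K c) • x = 0 := by rwa [algebraMap_smul]
      have hc : algebraMap R K c ≠ 0 := fun h' =>
        h0 (IsFractionRing.injective R K (by simpa using h'))
      exact (smul_eq_zero.mp h1).resolve_left hc
  set q : V →ₗ[K] V ⧸ X := X.mkQ with hq
  set Lbar : Submodule R (V ⧸ X) := L.map (q.restrictScalars R) with hLbar
  haveI : Module.Finite R Lbar := Module.Finite.iff_fg.mpr (hfg.map _)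
  obtain ⟨n, cb⟩ := Module.basisOfFiniteTypeTorsionFree' (R := R) (M := Lbar)
  set u : Fin n → V ⧸ X := fun i => (cb i : V ⧸ X) with hu
  have humem : ∀ i, u i ∈ Lbar := fun i => (cb i).2
  have hspanR : Submodule.span R (Set.range u) = Lbar := by
    have : Set.range u = Lbar.subtype '' Set.range cb := by
      rw [← Set.range_comp]; rfl
    rw [this, ← Submodule.map_span, cb.span_eq, Submodule.map_top, Submodule.range_subtype]
  have hspanbar : Submodule.span K (Lbar : Set (V ⧸ X)) = ⊤ := by
    have hcoe : (Lbar : Set (V ⧸ X)) = q '' (L : Set V) := by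
      rw [hLbar]; rfl
    rw [hcoe, ← Submodule.map_span, hspan, Submodule.map_top, Submodule.range_mkQ]
  have hUspan : Submodule.span K (Set.range u) = ⊤ := by
    rw [← Submodule.span_span_of_tower (R := R), hspanR, hspanbar]
  have hindepK : LinearIndependent K u := by
    rw [← LinearIndependent.iff_fractionRing (R := R) (K := K)]
    exact cb.linearIndependent.map' Lbar.subtype (Submodule.ker_subtype _)
  set e : Basis (Fin n) K (V ⧸ X) := Basis.mk hindepK (by rw [hUspan]) with he
  have he_apply : ∀ i, e i = u i := fun i => Basis.mk_apply _ _ _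
  -- the map β : X → Dual (V ⧸ X)
  have hker : ∀ x : X, X ≤ LinearMap.ker (B (x : V)) := by
    intro x x' hx'
    rw [LinearMap.mem_ker]
    exact hBX x x.2 x' hx'
  set β : X →ₗ[K] Module.Dual K (V ⧸ X) :=
    { toFun := fun x => X.liftQ (B (x : V)) (hker x)
      map_add' := by
        intro x y
        refine LinearMap.ext fun w => ?_
        obtain ⟨z, rfl⟩ := Submodule.Quotient.mk_surjective X w
        simp [Submodule.liftQ_apply]
      map_smul' := by
        intro c x
        refine LinearMap.ext fun w => ?_
        obtain ⟨z, rfl⟩ := Submodule.Quotient.mk_surjective X w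
        simp [Submodule.liftQ_apply] } with hβ
  have hβ_apply : ∀ (x : X) (w : V), β x (Submodule.Quotient.mk w) = B (x : V) w :=
    fun x w => Submodule.liftQ_apply _ _ _
  have hβinj : Function.Injective β := by
    intro x y hxy
    have h1 : ∀ w : V, B (x : V) w = B (y : V) w := by
      intro w
      rw [← hβ_apply x w, ← hβ_apply y w, hxy]
    have h2 : ((x : V) - y) = 0 := by
      apply hnd
      intro w
      rw [map_sub, LinearMap.sub_apply, h1 w, sub_self]
    exact Subtype.ext (sub_eq_zero.mp h2)
  -- the map γ : V ⧸ X → Dual X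
  have hγker : X ≤ LinearMap.ker (X.subtype.dualMap ∘ₗ B.flip) := by
    intro x' hx'
    rw [LinearMap.mem_ker]
    refine LinearMap.ext fun x => ?_
    simp only [LinearMap.coe_comp, Function.comp_apply, LinearMap.dualMap_apply,
      LinearMap.flip_apply, Submodule.coe_subtype, LinearMap.zero_apply]
    exact hBX x x.2 x' hx'
  set γ : (V ⧸ X) →ₗ[K] Module.Dual K X := X.liftQ (X.subtype.dualMap ∘ₗ B.flip) hγker with hγ
  have hγinj : Function.Injective γ := by
    rw [← LinearMap.ker_eq_bot, eq_bot_iff]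
    intro w hw
    obtain ⟨z, rfl⟩ := Submodule.Quotient.mk_surjective X w
    rw [LinearMap.mem_ker] at hw
    have h1 : ∀ x ∈ X, B z x = 0 := by
      intro x hx
      have := DFunLike.congr_fun hw ⟨x, hx⟩
      simp only [hγ, Submodule.liftQ_apply, LinearMap.coe_comp, Function.comp_apply,
        LinearMap.dualMap_apply, LinearMap.flip_apply, Submodule.coe_subtype,
        LinearMap.zero_apply] at this
      rw [hsymm]
      exact this
    simpa [Submodule.Quotient.mk_eq_zero] using (hX z).mpr h1
  -- dimension count
  have hfin1 : finrank K X ≤ finrank K (V ⧸ X) := by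
    calc finrank K X ≤ finrank K (Module.Dual K (V ⧸ X)) :=
          LinearMap.finrank_le_finrank_of_injective hβinj
      _ = finrank K (V ⧸ X) := Subspace.dual_finrank_eq
  have hfin2 : finrank K (V ⧸ X) ≤ finrank K X := by
    calc finrank K (V ⧸ X) ≤ finrank K (Module.Dual K X) :=
          LinearMap.finrank_le_finrank_of_injective hγinj
      _ = finrank K X := Subspace.dual_finrank_eq
  have hβsurj : Function.Surjective β := by
    have heq : finrank K X = finrank K (Module.Dual K (V ⧸ X)) := by
      rw [Subspace.dual_finrank_eq]
      exact le_antisymm hfin1 hfin2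
    exact (LinearMap.injective_iff_surjective_of_finrank_eq_finrank heq).mp hβinj
  choose xf hxf using fun i => hβsurj (e.coord i)
  -- coordinates of Lbar are integral
  have hcoord : ∀ i, ∀ w ∈ Lbar, e.coord i w ∈ (algebraMap R K).range := by
    intro i w hw
    rw [← hspanR] at hw
    induction hw using Submodule.span_induction with
    | mem w hw =>
      obtain ⟨j, rfl⟩ := hw
      rw [← he_apply j]
      rcases eq_or_ne j i with h | h
      · subst h; refine ⟨1, ?_⟩; simp [Basis.coord_apply, Basis.repr_self]
      · refine ⟨0, ?_⟩; simp [Basis.coord_apply, Basis.repr_self, Finsupp.single_apply, h]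
    | zero => exact ⟨0, by simp⟩
    | add w₁ w₂ _ _ h₁ h₂ =>
      obtain ⟨r, hr⟩ := h₁; obtain ⟨s, hs⟩ := h₂
      exact ⟨r + s, by simp [map_add, hr, hs]⟩
    | smul r w _ h =>
      obtain ⟨s, hs⟩ := h
      refine ⟨r * s, ?_⟩
      rw [← algebraMap_smul K r w, map_smul, smul_eq_mul, map_mul, hs]
  -- the xf i are in X ⊓ dualLat
  have hxM : ∀ i, (xf i : V) ∈ X.restrictScalars R ⊓ dualLat B L := by
    intro i
    refine ⟨(xf i).2, ?_⟩
    intro y hy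
    have h1 : B ((xf i : X) : V) y = e.coord i (Submodule.Quotient.mk y) := by
      rw [← hβ_apply (xf i) y, hxf i]
    rw [h1]
    exact hcoord i _ ⟨y, hy, rfl⟩
  -- conclude
  have hrep := e.sum_repr (Submodule.Quotient.mk v : V ⧸ X)
  have hcoefs : ∀ i, ∃ r : R, algebraMap R K r = e.repr (Submodule.Quotient.mk v) i := by
    intro i
    have h1 : e.repr (Submodule.Quotient.mk v) i = B v (xf i : V) := by
      rw [hsymm, ← hβ_apply (xf i) v, hxf i, Basis.coord_apply]
    rw [h1]
    obtain ⟨r, hr⟩ := hv _ (hxM i)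
    exact ⟨r, hr⟩
  choose r hr using hcoefs
  have hmem : (Submodule.Quotient.mk v : V ⧸ X) ∈ Lbar := by
    rw [← hrep]
    refine Submodule.sum_mem _ fun i _ => ?_
    rw [← hr i, algebraMap_smul, he_apply i]
    exact Submodule.smul_mem _ _ (humem i)
  obtain ⟨l, hl, hql⟩ := hmem
  have hxmem : v - l ∈ X := by
    rw [← Submodule.Quotient.mk_eq_zero X, Submodule.Quotient.mk_sub]
    have : (Submodule.Quotient.mk l : V ⧸ X) = Submodule.Quotient.mk v := hql
    rw [this, sub_self]
  refine Submodule.mem_sup.mpr ⟨v - l, hxmem, l, hl, by abel⟩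

end Aux



/-- The Witt class of the discriminant form of an almost unimodular `G`-lattice depends only on
the Witt class of the ambient `G`-bilinear form: if `(V₀, b₀, ρ₀)` and `(V₁, b₁, ρ₁)` are bounded
`G`-bilinear forms over `K` such that `V₀ ⊕ V₁(-1)` is neutral, and `Λ₀ ⊆ V₀`, `Λ₁ ⊆ V₁` are
almost unimodular `G`-lattices, then the orthogonal sum of the discriminant form of `Λ₀` and of
the `(-1)`-scaled discriminant form of `Λ₁` is a neutral `G`-bilinear form over the residue
field (the neutrality being expressed via a `G`-stable lagrangian, written in terms of its
preimage `Y` with `Λ₀ × Λ₁ ⊆ Y ⊆ Λ₀^∨ × Λ₁^∨`). -/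
theorem discriminant_form_well_defined_on_witt_classes
    {R : Type*} [CommRing R] [IsDomain R] [IsDiscreteValuationRing R]
    {K : Type*} [Field K] [Algebra R K] [IsFractionRing R K]
    (π : R) (hπ : Irreducible π)
    {G : Type*} [Group G]
    {V₀ : Type*} [AddCommGroup V₀] [Module K V₀] [Module R V₀] [IsScalarTower R K V₀]
    [FiniteDimensional K V₀]
    {V₁ : Type*} [AddCommGroup V₁] [Module K V₁] [Module R V₁] [IsScalarTower R K V₁]
    [FiniteDimensional K V₁]
    (b₀ : LinearMap.BilinForm K V₀) (b₁ : LinearMap.BilinForm K V₁)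
    (hsymm₀ : ∀ x y, b₀ x y = b₀ y x) (hsymm₁ : ∀ x y, b₁ x y = b₁ y x)
    (hnondeg₀ : ∀ x, (∀ y, b₀ x y = 0) → x = 0)
    (hnondeg₁ : ∀ x, (∀ y, b₁ x y = 0) → x = 0)
    (ρ₀ : G →* V₀ ≃ₗ[K] V₀) (ρ₁ : G →* V₁ ≃ₗ[K] V₁)
    (hinv₀ : ∀ (g : G) (x y : V₀), b₀ (ρ₀ g x) (ρ₀ g y) = b₀ x y)
    (hinv₁ : ∀ (g : G) (x y : V₁), b₁ (ρ₁ g x) (ρ₁ g y) = b₁ x y)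
    -- the orthogonal direct sum `V₀ ⊕ V₁(-1)` is neutral : it has a `G`-stable lagrangian
    (hneutral : ∃ X : Submodule K (V₀ × V₁),
      (∀ g : G, X.map ((ρ₀ g).toLinearMap.prodMap (ρ₁ g).toLinearMap) = X) ∧
      (∀ v : V₀ × V₁, v ∈ X ↔ ∀ x ∈ X, b₀ v.1 x.1 - b₁ v.2 x.2 = 0))
    -- `Λ₀` is an almost unimodular `G`-lattice in `V₀`
    (Λ₀ : Submodule R V₀)
    (hΛ₀lat : Λ₀.FG ∧ Submodule.span K (Λ₀ : Set V₀) = ⊤ ∧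
      ∀ g : G, Λ₀.map ((ρ₀ g).toLinearMap.restrictScalars R) = Λ₀)
    (hΛ₀self : ∀ x ∈ Λ₀, ∀ y ∈ Λ₀, b₀ x y ∈ (algebraMap R K).range)
    (hΛ₀au : ∀ x : V₀, (∀ y ∈ Λ₀, b₀ x y ∈ (algebraMap R K).range) → π • x ∈ Λ₀)
    -- `Λ₁` is an almost unimodular `G`-lattice in `V₁`
    (Λ₁ : Submodule R V₁)
    (hΛ₁lat : Λ₁.FG ∧ Submodule.span K (Λ₁ : Set V₁) = ⊤ ∧
      ∀ g : G, Λ₁.map ((ρ₁ g).toLinearMap.restrictScalars R) = Λ₁)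
    (hΛ₁self : ∀ x ∈ Λ₁, ∀ y ∈ Λ₁, b₁ x y ∈ (algebraMap R K).range)
    (hΛ₁au : ∀ x : V₁, (∀ y ∈ Λ₁, b₁ x y ∈ (algebraMap R K).range) → π • x ∈ Λ₁) :
    -- then `disc(Λ₀) ⊕ disc(Λ₁)(-1)` is neutral : there is a `G`-stable lagrangian in the
    -- quotient `(Λ₀^∨ × Λ₁^∨)/(Λ₀ × Λ₁)`, given by its preimage `Y`
    ∃ Y : Submodule R (V₀ × V₁),
      Λ₀.prod Λ₁ ≤ Y ∧
      (∀ g : G, Y.map (((ρ₀ g).toLinearMap.prodMap (ρ₁ g).toLinearMap).restrictScalars R) = Y) ∧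
      (∀ v : V₀ × V₁, v ∈ Y ↔
        (((∀ y ∈ Λ₀, b₀ v.1 y ∈ (algebraMap R K).range) ∧
          (∀ y ∈ Λ₁, b₁ v.2 y ∈ (algebraMap R K).range)) ∧
        ∀ x ∈ Y, ∃ c ∈ IsLocalRing.maximalIdeal R,
          algebraMap R K c = algebraMap R K π * (b₀ v.1 x.1 - b₁ v.2 x.2))) := by
  classical
  obtain ⟨X, hXstab, hXlag⟩ := hneutral
  set B : LinearMap.BilinForm K (V₀ × V₁) :=
    LinearMap.mk₂ K (fun v w => b₀ v.1 w.1 - b₁ v.2 w.2)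
      (fun m₁ m₂ n => by
        simp only [Prod.fst_add, Prod.snd_add, map_add, LinearMap.add_apply]; ring)
      (fun c m n => by
        simp only [Prod.smul_fst, Prod.smul_snd, map_smul, LinearMap.smul_apply,
          smul_eq_mul]; ring)
      (fun m n₁ n₂ => by
        simp only [Prod.fst_add, Prod.snd_add, map_add]; ring)
      (fun c m n => by
        simp only [Prod.smul_fst, Prod.smul_snd, map_smul, smul_eq_mul]; ring) with hB
  have hB_apply : ∀ v w : V₀ × V₁, B v w = b₀ v.1 w.1 - b₁ v.2 w.2 := fun v w => rfl
  have hBsymm : ∀ v w, B v w = B w v := by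
    intro v w
    rw [hB_apply, hB_apply, hsymm₀ v.1 w.1, hsymm₁ v.2 w.2]
  have hBnd : ∀ v, (∀ w, B v w = 0) → v = 0 := by
    intro v h
    have h₀ : ∀ y, b₀ v.1 y = 0 := by
      intro y
      have := h (y, 0)
      rw [hB_apply] at this
      simpa using this
    have h₁ : ∀ y, b₁ v.2 y = 0 := by
      intro y
      have := h (0, y)
      rw [hB_apply] at this
      simp only [map_zero, LinearMap.zero_apply, zero_sub, neg_eq_zero] at this
      exact this
    exact Prod.ext_iff.mpr ⟨hnondeg₀ _ h₀, hnondeg₁ _ h₁⟩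
  have hX : ∀ v, v ∈ X ↔ ∀ x ∈ X, B v x = 0 := by
    intro v
    rw [hXlag v]
    simp only [hB_apply]
  set L : Submodule R (V₀ × V₁) := Λ₀.prod Λ₁ with hLdef
  have hLfg : L.FG := hΛ₀lat.1.prod hΛ₁lat.1
  have hLspan : Submodule.span K (L : Set (V₀ × V₁)) = ⊤ := by
    rw [eq_top_iff]
    rintro ⟨a, c⟩ -
    have h₀ : (a, (0 : V₁)) ∈ Submodule.span K (L : Set (V₀ × V₁)) := by
      have h1 : (a, (0 : V₁)) ∈
          Submodule.map (LinearMap.inl K V₀ V₁) (Submodule.span K (Λ₀ : Set V₀)) := by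
        rw [hΛ₀lat.2.1]
        exact ⟨a, trivial, rfl⟩
      rw [Submodule.map_span] at h1
      refine Submodule.span_mono ?_ h1
      rintro _ ⟨y, hy, rfl⟩
      exact ⟨hy, Submodule.zero_mem Λ₁⟩
    have h₁ : ((0 : V₀), c) ∈ Submodule.span K (L : Set (V₀ × V₁)) := by
      have h1 : ((0 : V₀), c) ∈
          Submodule.map (LinearMap.inr K V₀ V₁) (Submodule.span K (Λ₁ : Set V₁)) := by
        rw [hΛ₁lat.2.1]
        exact ⟨c, trivial, rfl⟩
      rw [Submodule.map_span] at h1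
      refine Submodule.span_mono ?_ h1
      rintro _ ⟨y, hy, rfl⟩
      exact ⟨Submodule.zero_mem Λ₀, hy⟩
    have := Submodule.add_mem _ h₀ h₁
    simpa using this
  have hLD : ∀ v : V₀ × V₁, v ∈ dualLat B L ↔
      ((∀ y ∈ Λ₀, b₀ v.1 y ∈ (algebraMap R K).range) ∧
       (∀ y ∈ Λ₁, b₁ v.2 y ∈ (algebraMap R K).range)) := by
    intro v
    constructor
    · intro h
      constructor
      · intro y hy
        have := h (y, 0) ⟨hy, Submodule.zero_mem Λ₁⟩
        rw [hB_apply] at this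
        simpa using this
      · intro y hy
        have := h (0, y) ⟨Submodule.zero_mem Λ₀, hy⟩
        rw [hB_apply] at this
        simp only [map_zero, LinearMap.zero_apply, zero_sub] at this
        obtain ⟨r, hr⟩ := this
        exact ⟨-r, by rw [map_neg, hr, neg_neg]⟩
    · rintro ⟨h₀, h₁⟩ y hy
      rw [hB_apply]
      exact sub_mem (h₀ y.1 hy.1) (h₁ y.2 hy.2)
  have hLle : L ≤ dualLat B L := by
    intro y hy
    rw [hLD]
    exact ⟨fun z hz => hΛ₀self y.1 hy.1 z hz, fun z hz => hΛ₁self y.2 hy.2 z hz⟩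
  -- the candidate lagrangian
  set Y : Submodule R (V₀ × V₁) := (X.restrictScalars R ⊓ dualLat B L) ⊔ L with hYdef
  have hYleD : Y ≤ dualLat B L := sup_le inf_le_right hLle
  -- the pi-translation
  have hm_eq : IsLocalRing.maximalIdeal R = Ideal.span {π} :=
    (IsDiscreteValuationRing.irreducible_iff_uniformizer π).mp hπ
  have hπK : algebraMap R K π ≠ 0 := fun h =>
    hπ.ne_zero (IsFractionRing.injective R K (by simpa using h))
  have hπtrans : ∀ t : K,
      (∃ c ∈ IsLocalRing.maximalIdeal R, algebraMap R K c = algebraMap R K π * t) ↔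
        t ∈ (algebraMap R K).range := by
    intro t
    constructor
    · rintro ⟨c, hcm, hc⟩
      rw [hm_eq, Ideal.mem_span_singleton] at hcm
      obtain ⟨d, rfl⟩ := hcm
      rw [map_mul] at hc
      exact ⟨d, mul_left_cancel₀ hπK hc⟩
    · rintro ⟨d, rfl⟩
      refine ⟨π * d, ?_, by rw [map_mul]⟩
      rw [hm_eq]
      exact Ideal.mul_mem_right _ _ (Ideal.mem_span_singleton_self π)
  -- equivariance helpers
  have hρ₀ : ∀ (g : G) (a : V₀), ρ₀ g (ρ₀ g⁻¹ a) = a := by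
    intro g a
    rw [map_inv]
    exact (ρ₀ g).apply_symm_apply a
  have hρ₁ : ∀ (g : G) (a : V₁), ρ₁ g (ρ₁ g⁻¹ a) = a := by
    intro g a
    rw [map_inv]
    exact (ρ₁ g).apply_symm_apply a
  have hLcl : ∀ (g : G) (v : V₀ × V₁), v ∈ L → (ρ₀ g v.1, ρ₁ g v.2) ∈ L := by
    intro g v hv
    constructor
    · rw [← hΛ₀lat.2.2 g]
      exact ⟨v.1, hv.1, rfl⟩
    · rw [← hΛ₁lat.2.2 g]
      exact ⟨v.2, hv.2, rfl⟩
  have hXcl : ∀ (g : G) (v : V₀ × V₁), v ∈ X → (ρ₀ g v.1, ρ₁ g v.2) ∈ X := by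
    intro g v hv
    rw [← hXstab g]
    exact ⟨v, hv, rfl⟩
  have hDcl : ∀ (g : G) (v : V₀ × V₁), v ∈ dualLat B L →
      (ρ₀ g v.1, ρ₁ g v.2) ∈ dualLat B L := by
    intro g v hv y hy
    have hy' : (ρ₀ g⁻¹ y.1, ρ₁ g⁻¹ y.2) ∈ L := hLcl g⁻¹ y hy
    have hcalc : B (ρ₀ g v.1, ρ₁ g v.2) y = B v (ρ₀ g⁻¹ y.1, ρ₁ g⁻¹ y.2) := by
      rw [hB_apply, hB_apply]
      have e0 : b₀ (ρ₀ g v.1) y.1 = b₀ v.1 (ρ₀ g⁻¹ y.1) := by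
        conv_lhs => rw [← hρ₀ g y.1]
        rw [hinv₀]
      have e1 : b₁ (ρ₁ g v.2) y.2 = b₁ v.2 (ρ₁ g⁻¹ y.2) := by
        conv_lhs => rw [← hρ₁ g y.2]
        rw [hinv₁]
      rw [e0, e1]
    rw [hcalc]
    exact hv _ hy'
  have hYcl : ∀ (g : G) (v : V₀ × V₁), v ∈ Y →
      ((ρ₀ g).toLinearMap.prodMap (ρ₁ g).toLinearMap) v ∈ Y := by
    intro g v hv
    obtain ⟨a, ha, c, hc, rfl⟩ := Submodule.mem_sup.mp hv
    have hmap : ((ρ₀ g).toLinearMap.prodMap (ρ₁ g).toLinearMap) (a + c) =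
        (ρ₀ g a.1, ρ₁ g a.2) + (ρ₀ g c.1, ρ₁ g c.2) := by
      simp [LinearMap.prodMap_apply, Prod.fst_add, Prod.snd_add, map_add, Prod.mk_add_mk]
    rw [hmap]
    exact Submodule.mem_sup.mpr
      ⟨_, ⟨hXcl g a ha.1, hDcl g a ha.2⟩, _, hLcl g c hc, rfl⟩
  refine ⟨Y, le_sup_right, ?_, ?_⟩
  · -- G-stability
    intro g
    apply le_antisymm
    · rintro _ ⟨v, hv, rfl⟩
      exact hYcl g v hv
    · intro y hy
      refine ⟨((ρ₀ g⁻¹).toLinearMap.prodMap (ρ₁ g⁻¹).toLinearMap) y, hYcl g⁻¹ y hy, ?_⟩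
      show ((ρ₀ g).toLinearMap.prodMap (ρ₁ g).toLinearMap)
        ((ρ₀ g⁻¹).toLinearMap.prodMap (ρ₁ g⁻¹).toLinearMap y) = y
      simp only [LinearMap.prodMap_apply, LinearEquiv.coe_coe]
      exact Prod.ext (hρ₀ g y.1) (hρ₁ g y.2)
  · -- membership characterization
    intro v
    constructor
    · intro hv
      refine ⟨(hLD v).mp (hYleD hv), ?_⟩
      intro x hx
      rw [← hB_apply, hπtrans (B v x)]
      obtain ⟨a, ha, c, hc, rfl⟩ := Submodule.mem_sup.mp hv
      obtain ⟨a', ha', c', hc', rfl⟩ := Submodule.mem_sup.mp hx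
      have hexp : B (a + c) (a' + c') = B a a' + B a c' + (B c a' + B c c') := by
        simp only [map_add, LinearMap.add_apply]
        ring
      rw [hexp, (hX a).mp ha.1 a' ((Submodule.restrictScalars_mem R X a').mp ha'.1), zero_add]
      have h1 : B a c' ∈ (algebraMap R K).range := ha.2 c' hc'
      have h2 : B c a' ∈ (algebraMap R K).range := by
        rw [hBsymm]
        exact ha'.2 c hc
      have h3 : B c c' ∈ (algebraMap R K).range := hLle hc c' hc'
      exact add_mem h1 (add_mem h2 h3)
    · rintro ⟨hpair, hall⟩
      have hvD : v ∈ dualLat B L := (hLD v).mpr hpair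
      have hvcore : ∀ m ∈ X.restrictScalars R ⊓ dualLat B L,
          B v m ∈ (algebraMap R K).range := by
        intro m hm
        have hmY : m ∈ Y := (le_sup_left : _ ≤ Y) hm
        have := hall m hmY
        rw [← hπtrans (B v m), hB_apply]
        exact this
      have hcore := core B hBsymm hBnd X hX L hLfg hLspan v hvcore
      obtain ⟨x, hx, c, hc, rfl⟩ := Submodule.mem_sup.mp hcore
      have hxD : x ∈ dualLat B L := by
        have hx' : x = (x + c) - c := by abel
        rw [hx']
        exact sub_mem hvD (hLle hc)
      exact Submodule.mem_sup.mpr ⟨x, ⟨hx, hxD⟩, c, hc, rfl⟩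
end

section
/- A G-bilinear form (V,b,ρ) over the fraction field K of a discrete valuation ring O_K contains a unimodular G-lattice if and only if (V,b,ρ) is bounded and there exists an almost unimodular G-lattice Λ ⊆ V whose discriminant form Λ^∨/Λ is a neutral G-bilinear form over the residue field k. -/
section Aux

variable {R : Type*} [CommRing R] [IsDomain R] [IsDiscreteValuationRing R]
    {K : Type*} [Field K] [Algebra R K] [IsFractionRing R K]
    {V : Type*} [AddCommGroup V] [Module K V] [Module R V] [IsScalarTower R K V]

theorem aux_mem_max {π : R} (hπ : Irreducible π) : π ∈ IsLocalRing.maximalIdeal R := by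
  rw [IsDiscreteValuationRing.irreducible_iff_uniformizer] at hπ
  rw [hπ]
  exact Ideal.mem_span_singleton_self π

theorem aux_dvd {π c : R} (hπ : Irreducible π) (hc : c ∈ IsLocalRing.maximalIdeal R) :
    π ∣ c := by
  rw [IsDiscreteValuationRing.irreducible_iff_uniformizer] at hπ
  rw [hπ, Ideal.mem_span_singleton] at hc
  exact hc

theorem aux_alg_ne {π : R} (hπ : Irreducible π) : algebraMap R K π ≠ 0 := by
  have h0 : π ≠ 0 := hπ.ne_zero
  simpa using fun h => h0 ((IsFractionRing.injective R K) (by simpa using h))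

end Aux


/-- A `G`-bilinear form `(V, b, ρ)` over the fraction field `K` of a discrete valuation ring `R`
contains a unimodular `G`-lattice if and only if it is bounded and there is an almost unimodular
`G`-lattice `Λ ⊆ V` whose discriminant form `Λ^∨/Λ` is neutral (the lagrangian of `Λ^∨/Λ` being
described by its preimage `X` with `Λ ⊆ X ⊆ Λ^∨`). -/
theorem contains_unimodular_G_lattice_iff
    {R : Type*} [CommRing R] [IsDomain R] [IsDiscreteValuationRing R]
    {K : Type*} [Field K] [Algebra R K] [IsFractionRing R K]
    (π : R) (hπ : Irreducible π)
    {G : Type*} [Group G]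
    {V : Type*} [AddCommGroup V] [Module K V] [Module R V] [IsScalarTower R K V]
    [FiniteDimensional K V]
    (b : LinearMap.BilinForm K V)
    (hsymm : ∀ x y, b x y = b y x)
    (hnondeg : ∀ x, (∀ y, b x y = 0) → x = 0)
    (ρ : G →* V ≃ₗ[K] V)
    (hinv : ∀ (g : G) (x y : V), b (ρ g x) (ρ g y) = b x y) :
    -- `(V, b, ρ)` contains a unimodular `G`-lattice ...
    (∃ Λ : Submodule R V,
      (Λ.FG ∧ Submodule.span K (Λ : Set V) = ⊤ ∧
        ∀ g : G, Λ.map ((ρ g).toLinearMap.restrictScalars R) = Λ) ∧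
      (∀ x : V, x ∈ Λ ↔ ∀ y ∈ Λ, b x y ∈ (algebraMap R K).range))
    ↔
    -- ... iff `(V, b, ρ)` is bounded ...
    ((∃ Λ : Submodule R V, Λ.FG ∧ Submodule.span K (Λ : Set V) = ⊤ ∧
        ∀ g : G, Λ.map ((ρ g).toLinearMap.restrictScalars R) = Λ) ∧
    -- ... and some almost unimodular `G`-lattice has neutral discriminant form
    ∃ Λ : Submodule R V,
      (Λ.FG ∧ Submodule.span K (Λ : Set V) = ⊤ ∧
        ∀ g : G, Λ.map ((ρ g).toLinearMap.restrictScalars R) = Λ) ∧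
      (∀ x ∈ Λ, ∀ y ∈ Λ, b x y ∈ (algebraMap R K).range) ∧
      (∀ x : V, (∀ y ∈ Λ, b x y ∈ (algebraMap R K).range) → π • x ∈ Λ) ∧
      -- the discriminant form `Λ^∨/Λ` (with pairing `(x, y) ↦ π b(x, y) mod m_K`) is neutral:
      -- there is a `G`-stable lagrangian, given by its preimage `X` in `Λ^∨`
      (∃ X : Submodule R V,
        Λ ≤ X ∧
        (∀ g : G, X.map ((ρ g).toLinearMap.restrictScalars R) = X) ∧
        (∀ v : V, v ∈ X ↔
          ((∀ y ∈ Λ, b v y ∈ (algebraMap R K).range) ∧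
          ∀ x ∈ X, ∃ c ∈ IsLocalRing.maximalIdeal R,
            algebraMap R K c = algebraMap R K π * b v x)))) := by
  have hπm : π ∈ IsLocalRing.maximalIdeal R := aux_mem_max hπ
  have hπ0 : algebraMap R K π ≠ 0 := aux_alg_ne (K := K) hπ
  constructor
  · rintro ⟨Λ, hlat, hΛ⟩
    refine ⟨⟨Λ, hlat⟩, Λ, hlat, ?_, ?_, Λ, le_refl _, hlat.2.2, ?_⟩
    · exact fun x hx => (hΛ x).mp hx
    · exact fun x hx => Λ.smul_mem π ((hΛ x).mpr hx)
    · intro v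
      constructor
      · intro hv
        refine ⟨(hΛ v).mp hv, fun x hx => ?_⟩
        obtain ⟨r, hr⟩ := (hΛ v).mp hv x hx
        exact ⟨π * r, Ideal.mul_mem_right r _ hπm, by rw [map_mul, hr]⟩
      · rintro ⟨h1, _⟩
        exact (hΛ v).mpr h1
  · rintro ⟨-, Λ, ⟨hfg, hspan, -⟩, -, hdual, X, hΛX, hXG, hXmem⟩
    -- basic facts about X
    have hXint : ∀ x ∈ X, ∀ y ∈ X, b x y ∈ (algebraMap R K).range := by
      intro x hx y hy
      obtain ⟨-, h2⟩ := (hXmem x).mp hx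
      obtain ⟨c, hc, hceq⟩ := h2 y hy
      obtain ⟨d, hd⟩ := aux_dvd hπ hc
      refine ⟨d, ?_⟩
      have h5 : algebraMap R K π * algebraMap R K d = algebraMap R K π * b x y := by
        rw [← map_mul, ← hd, hceq]
      exact mul_left_cancel₀ hπ0 h5
    have hπX : ∀ x ∈ X, π • x ∈ Λ := fun x hx => hdual x ((hXmem x).mp hx).1
    refine ⟨X, ⟨?_, ?_, hXG⟩, ?_⟩
    · -- finitely generated
      set f : V →ₗ[R] V :=
        { toFun := fun v => π • v
          map_add' := fun a c => smul_add π a c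
          map_smul' := fun r v => smul_comm π r v } with hf
      have hfi : Function.Injective f := by
        intro a c h
        have h' : (algebraMap R K π) • a = (algebraMap R K π) • c := by
          simpa [hf, algebraMap_smul] using h
        exact smul_right_injective V hπ0 h'
      have hmap : X.map f ≤ Λ := by
        rintro _ ⟨x, hx, rfl⟩
        exact hπX x hx
      haveI : IsNoetherian R Λ := isNoetherian_of_fg_of_noetherian Λ hfg
      have h2 : ((X.map f).comap Λ.subtype).FG := IsNoetherian.noetherian _
      have h3 : ((X.map f).comap Λ.subtype).map Λ.subtype = X.map f := by
        rw [Submodule.map_comap_subtype, inf_eq_right.mpr hmap]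
      have h4 : (X.map f).FG := h3 ▸ h2.map Λ.subtype
      exact Submodule.fg_of_fg_map_injective f hfi h4
    · -- spans V
      rw [eq_top_iff, ← hspan]
      exact Submodule.span_mono hΛX
    · -- unimodular
      intro x
      constructor
      · exact hXint x
      · intro h
        refine (hXmem x).mpr ⟨fun y hy => h y (hΛX hy), fun y hy => ?_⟩
        obtain ⟨r, hr⟩ := h y hy
        exact ⟨π * r, Ideal.mul_mem_right r _ hπm, by rw [map_mul, hr]⟩
end

section
/- Let V and M be (A,ε)-bilinear forms over K. If M is neutral and the orthogonal direct sum V ⊕ M is neutral, then V is neutral. -/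
open LinearMap (BilinForm)

lemma aux_orthogonal_sup {K V : Type*} [Field K] [AddCommGroup V] [Module K V]
    (B : BilinForm K V) (S T : Submodule K V) :
    B.orthogonal (S ⊔ T) = B.orthogonal S ⊓ B.orthogonal T := by
  ext x
  simp only [LinearMap.BilinForm.mem_orthogonal_iff, Submodule.mem_inf]
  constructor
  · intro h
    exact ⟨fun n hn => h n (Submodule.mem_sup_left hn),
      fun n hn => h n (Submodule.mem_sup_right hn)⟩
  · rintro ⟨h1, h2⟩ n hn
    obtain ⟨s, hs, t, ht, rfl⟩ := Submodule.mem_sup.mp hn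
    have e1 : B s x = 0 := h1 s hs
    have e2 : B t x = 0 := h2 t ht
    show B (s + t) x = 0
    rw [map_add, LinearMap.add_apply, e1, e2, add_zero]

lemma aux_orthogonal_inf {K V : Type*} [Field K] [AddCommGroup V] [Module K V]
    [FiniteDimensional K V] {B : BilinForm K V}
    (hB : B.Nondegenerate) (h0 : B.IsRefl) (S T : Submodule K V) :
    B.orthogonal (S ⊓ T) = B.orthogonal S ⊔ B.orthogonal T := by
  have h1 : B.orthogonal (B.orthogonal S ⊔ B.orthogonal T) = S ⊓ T := by
    rw [aux_orthogonal_sup, LinearMap.BilinForm.orthogonal_orthogonal hB h0,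
      LinearMap.BilinForm.orthogonal_orthogonal hB h0]
  calc B.orthogonal (S ⊓ T)
      = B.orthogonal (B.orthogonal (B.orthogonal S ⊔ B.orthogonal T)) := by rw [h1]
    _ = _ := LinearMap.BilinForm.orthogonal_orthogonal hB h0 _

/-- If `M` is a neutral `(A, ε)`-bilinear form and the orthogonal direct sum `V ⊕ M` is
neutral, then `V` is neutral. -/
theorem neutral_of_orthogonal_sum_neutral
    {K : Type*} [Field K] {A : Type*} [Ring A] [Algebra K A]
    -- the involution `σ` of the `K`-algebra `A`
    (σ : A → A) (hσ1 : σ 1 = 1) (hσadd : ∀ a b : A, σ (a + b) = σ a + σ b)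
    (hσmul : ∀ a b : A, σ (a * b) = σ b * σ a) (hσσ : ∀ a : A, σ (σ a) = a)
    (hσlin : ∀ (c : K) (a : A), σ (c • a) = c • σ a)
    (ε : K) (hε : ε = 1 ∨ ε = -1)
    {V : Type*} [AddCommGroup V] [Module K V] [Module A V] [IsScalarTower K A V]
    [FiniteDimensional K V]
    {M : Type*} [AddCommGroup M] [Module K M] [Module A M] [IsScalarTower K A M]
    [FiniteDimensional K M]
    -- the `(A, ε)`-bilinear form `V`
    (bV : LinearMap.BilinForm K V)
    (hbVnd : ∀ x, (∀ y, bV x y = 0) → x = 0)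
    (hbVσ : ∀ (a : A) (x y : V), bV (a • x) y = bV x (σ a • y))
    (hbVε : ∀ x y, bV x y = ε * bV y x)
    -- the `(A, ε)`-bilinear form `M`
    (bM : LinearMap.BilinForm K M)
    (hbMnd : ∀ x, (∀ y, bM x y = 0) → x = 0)
    (hbMσ : ∀ (a : A) (x y : M), bM (a • x) y = bM x (σ a • y))
    (hbMε : ∀ x y, bM x y = ε * bM y x)
    -- `M` is neutral
    (hMneutral : ∃ X : Submodule A M, ∀ m : M, m ∈ X ↔ ∀ x ∈ X, bM m x = 0)
    -- the orthogonal direct sum `V ⊕ M` is neutral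
    (hVMneutral : ∃ Z : Submodule A (V × M),
      ∀ p : V × M, p ∈ Z ↔ ∀ q ∈ Z, bV p.1 q.1 + bM p.2 q.2 = 0) :
    -- then `V` is neutral
    ∃ X : Submodule A V, ∀ v : V, v ∈ X ↔ ∀ x ∈ X, bV v x = 0 := by
  obtain ⟨L, hL⟩ := hMneutral
  obtain ⟨Z, hZ⟩ := hVMneutral
  have hε0 : ε ≠ 0 := by rcases hε with h | h <;> simp [h]
  -- the sum form on `V × M`
  set b : BilinForm K (V × M) :=
    bV.compl₁₂ (LinearMap.fst K V M) (LinearMap.fst K V M) +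
      bM.compl₁₂ (LinearMap.snd K V M) (LinearMap.snd K V M) with hbdef
  have hb : ∀ p q : V × M, b p q = bV p.1 q.1 + bM p.2 q.2 := by
    intro p q; simp [hbdef]
  -- reflexivity
  have hbVr : bV.IsRefl := by
    intro x y h
    rw [hbVε y x, h, mul_zero]
  have hbMr : bM.IsRefl := by
    intro x y h
    rw [hbMε y x, h, mul_zero]
  have hbr : b.IsRefl := by
    intro p q h
    have : b q p = ε * b p q := by
      rw [hb, hb, hbVε q.1 p.1, hbMε q.2 p.2, mul_add]
    rw [this, h, mul_zero]
  -- nondegeneracy of `b`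
  have hbnd : b.Nondegenerate := by
    refine (LinearMap.IsRefl.nondegenerate_iff_separatingLeft hbr).mpr ?_
    intro p hp
    have h1 : p.1 = 0 := by
      apply hbVnd
      intro y
      have := hp (y, 0)
      rwa [hb, map_zero, add_zero] at this
    have h2 : p.2 = 0 := by
      apply hbMnd
      intro y
      have := hp (0, y)
      rw [hb] at this
      simpa using this
    exact Prod.ext h1 h2
  -- `K`-submodule versions
  set ZK : Submodule K (V × M) := Z.restrictScalars K with hZKdef
  set LK : Submodule K M := L.restrictScalars K with hLKdef
  have hZK : b.orthogonal ZK = ZK := by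
    ext p
    simp only [LinearMap.BilinForm.mem_orthogonal_iff]
    rw [hZKdef, Submodule.restrictScalars_mem, hZ p]
    constructor
    · intro h q hq
      have : b q p = 0 := h q hq
      have := hbr q p this
      rwa [hb] at this
    · intro h q hq
      have : b p q = 0 := by rw [hb]; exact h q hq
      exact hbr p q this
  have hLK : bM.orthogonal LK = LK := by
    ext m
    simp only [LinearMap.BilinForm.mem_orthogonal_iff]
    rw [hLKdef, Submodule.restrictScalars_mem, hL m]
    constructor
    · intro h x hx
      exact hbMr x m (h x hx)
    · intro h x hx
      exact hbMr m x (h x hx)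
  -- the two auxiliary submodules of `V × M`
  set P : Submodule K (V × M) := Submodule.prod ⊤ LK with hPdef
  set Q : Submodule K (V × M) := Submodule.prod ⊥ LK with hQdef
  have hP : b.orthogonal P = Q := by
    ext p
    rw [LinearMap.BilinForm.mem_orthogonal_iff, hQdef, Submodule.mem_prod, Submodule.mem_bot]
    constructor
    · intro h
      have h1 : p.1 = 0 := by
        apply hbVnd
        intro y
        have := h (y, 0) (Submodule.mem_prod.mpr ⟨trivial, Submodule.zero_mem _⟩)
        rw [hb] at this
        simp only [map_zero, LinearMap.zero_apply, add_zero] at this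
        exact hbVr y p.1 this
      have h2 : p.2 ∈ LK := by
        rw [← hLK]
        intro l hl
        have := h (0, l) (Submodule.mem_prod.mpr ⟨trivial, hl⟩)
        rw [hb] at this
        simp only [map_zero, LinearMap.zero_apply, zero_add] at this
        exact this
      exact ⟨h1, h2⟩
    · rintro ⟨h1, h2⟩ q hq
      have hq2 : q.2 ∈ LK := (Submodule.mem_prod.mp hq).2
      rw [hb, h1, map_zero, zero_add]
      rw [← hLK] at h2
      exact h2 q.2 hq2
  -- the candidate lagrangian in `V`
  set X : Submodule A V :=
    Submodule.map (LinearMap.fst A V M) (Z ⊓ Submodule.comap (LinearMap.snd A V M) L)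
    with hXdef
  have hXmem : ∀ v : V, v ∈ X ↔ ∃ m ∈ L, (v, m) ∈ Z := by
    intro v
    constructor
    · rintro ⟨⟨v', m⟩, ⟨hz, hm⟩, rfl⟩
      exact ⟨m, hm, hz⟩
    · rintro ⟨m, hm, hz⟩
      exact ⟨(v, m), ⟨hz, hm⟩, rfl⟩
  refine ⟨X, fun v => ?_⟩
  constructor
  · -- `X ⊆ X^⊥`
    intro hv x hx
    obtain ⟨m, hm, hz⟩ := (hXmem v).mp hv
    obtain ⟨m', hm', hz'⟩ := (hXmem x).mp hx
    have h1 : bV v x + bM m m' = 0 := (hZ (v, m)).mp hz (x, m') hz'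
    have h2 : bM m m' = 0 := (hL m).mp hm m' hm'
    rw [h2, add_zero] at h1
    exact h1
  · -- `X^⊥ ⊆ X`
    intro hv
    have key : (v, (0 : M)) ∈ b.orthogonal (ZK ⊓ P) := by
      intro q hq
      obtain ⟨hq1, hqP⟩ := Submodule.mem_inf.mp hq
      have hq2 : q.2 ∈ LK := (Submodule.mem_prod.mp hqP).2
      have hqZ : (q.1, q.2) ∈ Z := by
        rw [Prod.mk.eta]
        exact Submodule.restrictScalars_mem K Z q |>.mp hq1
      have hqX : q.1 ∈ X := (hXmem q.1).mpr ⟨q.2, hq2, hqZ⟩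
      rw [hb, map_zero, add_zero]
      exact hbVr v q.1 (hv q.1 hqX)
    rw [aux_orthogonal_inf hbnd hbr, hZK, hP] at key
    obtain ⟨z, hz, q, hq, hvq⟩ := Submodule.mem_sup.mp key
    rw [hQdef, Submodule.mem_prod, Submodule.mem_bot] at hq
    apply (hXmem v).mpr
    refine ⟨z.2, ?_, ?_⟩
    · rw [hZKdef, Submodule.restrictScalars_mem] at hz
      have : z.2 = (z + q).2 - q.2 := by simp
      have h2 : (z + q).2 = 0 := by rw [hvq]
      rw [this, h2, zero_sub]
      exact L.neg_mem (by rw [hLKdef, Submodule.restrictScalars_mem] at *; exact hq.2)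
    · have hz1 : z.1 = v := by
        have := congrArg Prod.fst hvq
        simpa [hq.1] using this
      have : (v, z.2) = z := by
        ext
        · exact hz1.symm
        · rfl
      rw [this]
      rw [hZKdef, Submodule.restrictScalars_mem] at hz
      exact hz
end

section
/- Let V be an (A,ε)-bilinear form over K and let X ⊆ V be a sub-A-module with X ⊆ X^⊥. Then b induces a non-degenerate form on X^⊥/X, making it an (A,ε)-bilinear form over K, and the orthogonal direct sum V(-1) ⊕ (X^⊥/X) is neutral; in fact the sub-A-module {(x, x mod X) : x ∈ X^⊥} is a lagrangian in it. -/
/-- If `X ⊆ X^⊥` is a sub-`A`-module of an `(A, ε)`-bilinear form `V`, then `b` induces a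
non-degenerate `(A, ε)`-bilinear form on `X^⊥/X`, and `V(-1) ⊕ X^⊥/X` is neutral, a lagrangian
being given by `{(x, x mod X) : x ∈ X^⊥}`. -/
theorem sublagrangian_reduction
    {K : Type*} [Field K] {A : Type*} [Ring A] [Algebra K A]
    (σ : A → A) (hσ1 : σ 1 = 1) (hσadd : ∀ a b : A, σ (a + b) = σ a + σ b)
    (hσmul : ∀ a b : A, σ (a * b) = σ b * σ a) (hσσ : ∀ a : A, σ (σ a) = a)
    (hσlin : ∀ (c : K) (a : A), σ (c • a) = c • σ a)
    (ε : K) (hε : ε = 1 ∨ ε = -1)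
    {V : Type*} [AddCommGroup V] [Module K V] [Module A V] [IsScalarTower K A V]
    [FiniteDimensional K V]
    (b : LinearMap.BilinForm K V)
    (hbnd : ∀ x, (∀ y, b x y = 0) → x = 0)
    (hbσ : ∀ (a : A) (x y : V), b (a • x) y = b x (σ a • y))
    (hbε : ∀ x y, b x y = ε * b y x)
    -- a sub-`A`-module `X` with `X ⊆ X^⊥`
    (X : Submodule A V) (hX : ∀ x ∈ X, ∀ y ∈ X, b x y = 0)
    -- `Xp` is the orthogonal `X^⊥` of `X`
    (Xp : Submodule A V) (hXp : ∀ v : V, v ∈ Xp ↔ ∀ x ∈ X, b v x = 0) :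
    -- then `b` induces a non-degenerate `(A, ε)`-bilinear form `b'` on `X^⊥/X` ...
    ∃ b' : (Xp ⧸ X.comap Xp.subtype) →ₗ[K] (Xp ⧸ X.comap Xp.subtype) →ₗ[K] K,
      (∀ x y : Xp, b' (Submodule.Quotient.mk x) (Submodule.Quotient.mk y) = b x y) ∧
      (∀ q, (∀ q', b' q q' = 0) → q = 0) ∧
      (∀ (a : A) (q q' : Xp ⧸ X.comap Xp.subtype), b' (a • q) q' = b' q (σ a • q')) ∧
      (∀ q q', b' q q' = ε * b' q' q) ∧
      -- ... and `V(-1) ⊕ X^⊥/X` is neutral, with lagrangian `{(x, x mod X) : x ∈ X^⊥}`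
      ∃ L : Submodule A (V × (Xp ⧸ X.comap Xp.subtype)),
        ((L : Set (V × (Xp ⧸ X.comap Xp.subtype))) =
          {p | ∃ x : Xp, p = ((x : V), Submodule.Quotient.mk x)}) ∧
        (∀ p : V × (Xp ⧸ X.comap Xp.subtype),
          p ∈ L ↔ ∀ q ∈ L, -(b p.1 q.1) + b' p.2 q.2 = 0) := by
  classical
  have hrefl : b.IsRefl := by
    intro x y h
    have := hbε y x
    rw [h, mul_zero] at this
    exact this
  have hXle : ∀ v ∈ X, v ∈ Xp := fun v hv => (hXp v).2 fun x hx => hX v hv x hx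
  -- key: anything orthogonal to Xp lies in X
  have hkey : ∀ v : V, (∀ y ∈ Xp, b v y = 0) → v ∈ X := by
    intro v hv
    have hXpo : Submodule.restrictScalars K Xp = b.orthogonal (Submodule.restrictScalars K X) := by
      ext w
      simp only [Submodule.restrictScalars_mem, LinearMap.BilinForm.mem_orthogonal_iff]
      rw [hXp]
      constructor
      · intro h x hx
        exact hrefl w x (h x hx)
      · intro h x hx
        exact hrefl x w (h x hx)
    have h2 : v ∈ b.orthogonal (Submodule.restrictScalars K Xp) := by
      intro y hy
      exact hrefl v y (hv y hy)
    rw [hXpo, LinearMap.BilinForm.orthogonal_orthogonal (show LinearMap.BilinForm.Nondegenerate b from ⟨hbnd, fun y hy => hbnd y fun x => by rw [hbε, hy, mul_zero]⟩) hrefl] at h2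
    exact h2
  set X' : Submodule A Xp := X.comap Xp.subtype with hX'
  -- the bilinear form restricted to Xp
  set j : Xp →ₗ[K] V := (Submodule.restrictScalars K Xp).subtype with hj
  set bb : Xp →ₗ[K] Xp →ₗ[K] K := b.compl₁₂ j j with hbb
  have hbbval : ∀ x y : Xp, bb x y = b x y := fun x y => rfl
  set X'K : Submodule K Xp := X'.restrictScalars K with hX'K
  -- descend the second argument
  have hker2 : ∀ x : Xp, X'K ≤ LinearMap.ker (bb x) := by
    intro x y hy
    have hyX : (y : V) ∈ X := hy
    exact (hXp x).1 x.2 y hyX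
  set c1 : Xp →ₗ[K] (Xp ⧸ X'K) →ₗ[K] K :=
    { toFun := fun x => X'K.liftQ (bb x) (hker2 x)
      map_add' := by
        intro x y; ext q
        simp
      map_smul' := by
        intro c x; ext q
        simp } with hc1
  have hker1 : X'K ≤ LinearMap.ker c1 := by
    intro x hx
    have hxX : (x : V) ∈ X := hx
    ext q
    simp only [hc1, LinearMap.coe_mk, AddHom.coe_mk, Submodule.liftQ_apply,
      LinearMap.zero_apply, LinearMap.zero_comp, LinearMap.comp_apply, Submodule.mkQ_apply]
    exact hrefl _ _ ((hXp q).1 q.2 x hxX)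
  set c : (Xp ⧸ X'K) →ₗ[K] (Xp ⧸ X'K) →ₗ[K] K := X'K.liftQ c1 hker1 with hc
  have hcval : ∀ x y : Xp, c (Submodule.Quotient.mk x) (Submodule.Quotient.mk y) = b x y := by
    intro x y; rfl
  set e : (Xp ⧸ X'K) ≃ₗ[K] (Xp ⧸ X') := Submodule.Quotient.restrictScalarsEquiv K X' with he
  set b' : (Xp ⧸ X') →ₗ[K] (Xp ⧸ X') →ₗ[K] K :=
    c.compl₁₂ e.symm.toLinearMap e.symm.toLinearMap with hb'
  have hsurj : ∀ q : Xp ⧸ X', ∃ x : Xp, Submodule.Quotient.mk x = q :=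
    Submodule.Quotient.mk_surjective X'
  have hb'val : ∀ x y : Xp, b' (Submodule.Quotient.mk x) (Submodule.Quotient.mk y) = b x y := by
    intro x y
    simp only [hb', LinearMap.compl₁₂_apply, LinearEquiv.coe_coe,
      Submodule.Quotient.restrictScalarsEquiv_symm_mk]
    exact hcval x y
  refine ⟨b', hb'val, ?_, ?_, ?_, ?_⟩
  · -- nondegenerate
    intro q hq
    obtain ⟨x, rfl⟩ := hsurj q
    have hxX : (x : V) ∈ X := by
      apply hkey
      intro y hy
      have := hq (Submodule.Quotient.mk ⟨y, hy⟩)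
      rw [hb'val] at this
      exact this
    exact (Submodule.Quotient.mk_eq_zero _).2 hxX
  · -- σ-sesquilinearity
    intro a q q'
    obtain ⟨x, rfl⟩ := hsurj q
    obtain ⟨y, rfl⟩ := hsurj q'
    rw [← Submodule.Quotient.mk_smul, ← Submodule.Quotient.mk_smul, hb'val, hb'val]
    exact hbσ a x y
  · -- ε-symmetry
    intro q q'
    obtain ⟨x, rfl⟩ := hsurj q
    obtain ⟨y, rfl⟩ := hsurj q'
    rw [hb'val, hb'val]
    exact hbε x y
  · -- the lagrangian
    refine ⟨LinearMap.range ((Xp.subtype).prod X'.mkQ), ?_, ?_⟩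
    · ext p
      simp only [SetLike.mem_coe, LinearMap.mem_range, LinearMap.prod_apply, Pi.prod,
        Submodule.coe_subtype, Submodule.mkQ_apply, Set.mem_setOf_eq]
      constructor
      · rintro ⟨x, rfl⟩; exact ⟨x, rfl⟩
      · rintro ⟨x, rfl⟩; exact ⟨x, rfl⟩
    · intro p
      constructor
      · rintro ⟨x, rfl⟩ q ⟨y, rfl⟩
        simp only [LinearMap.prod_apply, Function.prod, Submodule.coe_subtype, Submodule.mkQ_apply]
        rw [hb'val]
        ring
      · intro h
        obtain ⟨v, q2⟩ := p
        obtain ⟨z, rfl⟩ := hsurj q2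
        have hall : ∀ y : Xp, b v y = b z y := by
          intro y
          have := h ((Xp.subtype).prod X'.mkQ y) ⟨y, rfl⟩
          simp only [LinearMap.prod_apply, Function.prod, Submodule.coe_subtype,
            Submodule.mkQ_apply] at this
          rw [hb'val] at this
          linear_combination -this
        have hvz : v - (z : V) ∈ X := by
          apply hkey
          intro y hy
          have := hall ⟨y, hy⟩
          simp only [map_sub, LinearMap.sub_apply]
          rw [this]
          ring
        have hvXp : v ∈ Xp := by
          have hv : v = (v - z) + z := by abel
          rw [hv]
          exact Xp.add_mem (hXle _ hvz) z.2
        refine ⟨⟨v, hvXp⟩, ?_⟩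
        simp only [LinearMap.prod_apply, Function.prod, Submodule.coe_subtype, Submodule.mkQ_apply]
        refine Prod.ext rfl ?_
        rw [Submodule.Quotient.eq]
        show (⟨v, hvXp⟩ : Xp) - z ∈ X.comap Xp.subtype
        simpa using hvz
end

section
/- Let M₁, …, Mₙ be pairwise non-isomorphic simple A-modules, and for each i let V_i be an (A,ε)-bilinear form over K whose underlying A-module is isomorphic to a finite direct sum of copies of M_i. If the orthogonal direct sum V₁ ⊕ ⋯ ⊕ Vₙ is neutral, then each V_i is neutral. (This is the injectivity underlying the isotypical decomposition W_A^ε(K) = ⊕_M W_A^ε(K,M).) -/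
section Key
variable {A : Type*} [Ring A] {Mi Mj W : Type*}
  [AddCommGroup Mi] [Module A Mi] [AddCommGroup Mj] [Module A Mj]
  [AddCommGroup W] [Module A W]

/-- A finite power of a simple module is semisimple. -/
theorem isSemisimpleModule_pi_simple [IsSimpleModule A Mi] (m : ℕ) :
    IsSemisimpleModule A (Fin m → Mi) :=
  isSemisimpleModule_of_isSemisimpleModule_submodule'
    (p := fun k => LinearMap.range (LinearMap.single A (fun _ : Fin m => Mi) k))
    (fun k => IsSemisimpleModule.congr
      (LinearEquiv.ofInjective _ (Pi.single_injective (M := fun _ : Fin m => Mi) k)).symm)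
    (LinearMap.iSup_range_single A _)

/-- A module embedding into a finite power of a simple module `Mi` admits no nonzero
map to a simple module `Mj` non-isomorphic to `Mi`. -/
theorem hom_eq_zero_of_isotypic [IsSimpleModule A Mi] [IsSimpleModule A Mj]
    (hne : IsEmpty (Mi ≃ₗ[A] Mj)) {m : ℕ} (e : W →ₗ[A] (Fin m → Mi))
    (he : Function.Injective e) (g : W →ₗ[A] Mj) : g = 0 := by
  haveI : IsSemisimpleModule A (Fin m → Mi) := isSemisimpleModule_pi_simple m
  haveI : IsSemisimpleModule A W :=
    IsSemisimpleModule.congr (LinearEquiv.ofInjective e he)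
  by_contra hg
  obtain ⟨S, hS⟩ := exists_isCompl (LinearMap.ker g)
  have hSg : Function.Injective (g ∘ₗ S.subtype) := by
    intro x y hxy
    have h1 : (x : W) - y ∈ LinearMap.ker g := by
      rw [LinearMap.mem_ker, map_sub, sub_eq_zero]; exact hxy
    have hmem : (x : W) - y ∈ LinearMap.ker g ⊓ S :=
      Submodule.mem_inf.mpr ⟨h1, S.sub_mem x.2 y.2⟩
    rw [hS.inf_eq_bot] at hmem
    exact Subtype.ext (by simpa [sub_eq_zero] using hmem)
  have hgS : g ∘ₗ S.subtype ≠ 0 := by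
    intro h0
    apply hg
    ext w
    obtain ⟨k, hk, s, hs, rfl⟩ := Submodule.mem_sup.mp (hS.sup_eq_top ▸ Submodule.mem_top (x := w))
    have h1 : g s = 0 := congrFun (congrArg DFunLike.coe h0) ⟨s, hs⟩
    have h2 : g k = 0 := hk
    simp [map_add, h1, h2]
  have hsurj : Function.Surjective (g ∘ₗ S.subtype) :=
    (g ∘ₗ S.subtype).surjective_of_ne_zero hgS
  let eSj : S ≃ₗ[A] Mj := LinearEquiv.ofBijective _ ⟨hSg, hsurj⟩
  haveI : IsSimpleModule A S := IsSimpleModule.congr eSj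
  haveI : Nontrivial Mj := IsSimpleModule.nontrivial (R := A) (M := Mj)
  obtain ⟨y, hy⟩ := exists_ne (0 : Mj)
  obtain ⟨s, hgs⟩ := hsurj y
  have hs0 : (s : W) ≠ 0 := by
    intro h0
    apply hy
    rw [← hgs]
    simp only [LinearMap.comp_apply, Submodule.coe_subtype, h0, map_zero]
  have hes : e s ≠ 0 := fun h0 => hs0 (he (by simpa using h0))
  obtain ⟨k, hk⟩ : ∃ k, e (s : W) k ≠ 0 := by
    by_contra h; push_neg at h; exact hes (funext h)
  let φ : S →ₗ[A] Mi := (LinearMap.proj k) ∘ₗ e ∘ₗ S.subtype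
  have hφ : φ ≠ 0 := by
    intro h0
    exact hk (congrFun (congrArg DFunLike.coe h0) s)
  have hφinj : Function.Injective φ := φ.injective_of_ne_zero hφ
  have hφsurj : Function.Surjective φ := φ.surjective_of_ne_zero hφ
  exact hne.elim ((LinearEquiv.ofBijective φ ⟨hφinj, hφsurj⟩).symm.trans eSj)
end Key


/-- Isotypical decomposition (injectivity): if `M₁, …, Mₙ` are pairwise non-isomorphic simple
`A`-modules and each `V i` is an `(A, ε)`-bilinear form whose underlying `A`-module is a finite
direct sum of copies of `M i`, then neutrality of the orthogonal direct sum `V₁ ⊕ ⋯ ⊕ Vₙ`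
implies neutrality of each `V i`. -/
theorem isotypical_decomposition_injectivity
    {K : Type*} [Field K] {A : Type*} [Ring A] [Algebra K A]
    (σ : A → A) (hσ1 : σ 1 = 1) (hσadd : ∀ a b : A, σ (a + b) = σ a + σ b)
    (hσmul : ∀ a b : A, σ (a * b) = σ b * σ a) (hσσ : ∀ a : A, σ (σ a) = a)
    (hσlin : ∀ (c : K) (a : A), σ (c • a) = c • σ a)
    (ε : K) (hε : ε = 1 ∨ ε = -1)
    {n : ℕ} (M : Fin n → Type*) [∀ i, AddCommGroup (M i)] [∀ i, Module A (M i)]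
    (hsimple : ∀ i, IsSimpleModule A (M i))
    (hpairwise : ∀ i j, i ≠ j → IsEmpty (M i ≃ₗ[A] M j))
    (V : Fin n → Type*) [∀ i, AddCommGroup (V i)] [∀ i, Module K (V i)] [∀ i, Module A (V i)]
    [∀ i, IsScalarTower K A (V i)] [∀ i, FiniteDimensional K (V i)]
    (b : ∀ i, LinearMap.BilinForm K (V i))
    (hbnd : ∀ i (x : V i), (∀ y, b i x y = 0) → x = 0)
    (hbσ : ∀ i (a : A) (x y : V i), b i (a • x) y = b i x (σ a • y))
    (hbε : ∀ i (x y : V i), b i x y = ε * b i y x)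
    -- each `V i` is isotypical of type `M i`
    (hisotyp : ∀ i, ∃ m : ℕ, Nonempty (V i ≃ₗ[A] (Fin m → M i)))
    -- the orthogonal direct sum of the `V i` is neutral
    (hneutral : ∃ Z : Submodule A (∀ i, V i),
      ∀ v : (∀ i, V i), v ∈ Z ↔ ∀ x ∈ Z, ∑ i, b i (v i) (x i) = 0) :
    -- then every `V i` is neutral
    ∀ i, ∃ X : Submodule A (V i), ∀ v : V i, v ∈ X ↔ ∀ x ∈ X, b i v x = 0 := by
  classical
  obtain ⟨Z, hZ⟩ := hneutral
  intro i
  haveI := fun j => hsimple j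
  -- semisimplicity of the ambient product module
  haveI hssV : ∀ j, IsSemisimpleModule A (V j) := fun j => by
    obtain ⟨m, ⟨e⟩⟩ := hisotyp j
    haveI := isSemisimpleModule_pi_simple (A := A) (Mi := M j) m
    exact IsSemisimpleModule.congr e
  haveI : IsSemisimpleModule A (∀ j, V j) :=
    isSemisimpleModule_of_isSemisimpleModule_submodule'
      (p := fun j => LinearMap.range (LinearMap.single A V j))
      (fun j => IsSemisimpleModule.congr
        (LinearEquiv.ofInjective _ (Pi.single_injective (M := V) j)).symm)
      (LinearMap.iSup_range_single A _)
  -- the key claim: the `i`-component of any element of `Z` "is in `Z`"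
  have hcomp : ∀ z ∈ Z, Pi.single i (z i) ∈ Z := by
    set Kk : Submodule A Z :=
      LinearMap.ker ((LinearMap.proj i : (∀ j, V j) →ₗ[A] V i) ∘ₗ Z.subtype) with hKk
    obtain ⟨C, hC⟩ := exists_isCompl Kk
    set rho : C →ₗ[A] (∀ l, V l) := Z.subtype ∘ₗ C.subtype with hrho
    -- the `i`-th projection is injective on `C`
    have hCinj : Function.Injective
        ((LinearMap.proj i : (∀ j, V j) →ₗ[A] V i) ∘ₗ rho) := by
      intro x y hxy
      have h1 : (x : Z) - y ∈ Kk := by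
        rw [LinearMap.mem_ker, map_sub, sub_eq_zero]
        exact hxy
      have hmem : (x : Z) - y ∈ Kk ⊓ C :=
        Submodule.mem_inf.mpr ⟨h1, C.sub_mem x.2 y.2⟩
      rw [hC.inf_eq_bot] at hmem
      exact Subtype.ext (by simpa [sub_eq_zero] using hmem)
    -- the other projections vanish on `C`
    have hzero : ∀ j, j ≠ i → ∀ c : C, ((c : Z) : ∀ k, V k) j = 0 := by
      intro j hj c
      obtain ⟨mi, ⟨ei⟩⟩ := hisotyp i
      obtain ⟨mj, ⟨ej⟩⟩ := hisotyp j
      have hij : IsEmpty (M i ≃ₗ[A] M j) := hpairwise i j (Ne.symm hj)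
      have hg : ∀ k : Fin mj,
          ((LinearMap.proj k : (Fin mj → M j) →ₗ[A] M j) ∘ₗ ej.toLinearMap ∘ₗ
            (LinearMap.proj j : (∀ l, V l) →ₗ[A] V j) ∘ₗ rho) = 0 := by
        intro k
        exact hom_eq_zero_of_isotypic (W := ↥C) hij
          (ei.toLinearMap ∘ₗ ((LinearMap.proj i : (∀ l, V l) →ₗ[A] V i) ∘ₗ rho))
          (ei.injective.comp hCinj) _
      have : ej (((c : Z) : ∀ k, V k) j) = 0 := by
        funext k
        have := congrFun (congrArg DFunLike.coe (hg k)) c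
        simpa [hrho] using this
      have := ej.injective (by simpa using this)
      simpa using this
    intro z hz
    -- decompose `⟨z, hz⟩` along `Kk ⊔ C = ⊤`
    obtain ⟨u, hu, c, hc, huc⟩ :=
      Submodule.mem_sup.mp (hC.sup_eq_top ▸ Submodule.mem_top (x := (⟨z, hz⟩ : Z)))
    have hzuc : z = (u : ∀ k, V k) + (c : ∀ k, V k) := by
      have := congrArg (Submodule.subtype Z) huc
      simpa using this.symm
    have hui : (u : ∀ k, V k) i = 0 := hu
    have hsingle : Pi.single i (z i) = ((c : ∀ k, V k)) := by
      funext j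
      by_cases hji : j = i
      · subst hji
        rw [Pi.single_eq_same, hzuc]
        simp [hui]
      · rw [Pi.single_eq_of_ne hji]
        exact (hzero j hji ⟨c, hc⟩).symm
    rw [hsingle]
    exact c.2
  -- the lagrangian of `V i`
  refine ⟨Z.comap (LinearMap.single A V i), fun v => ⟨fun hv x hx => ?_, fun hv => ?_⟩⟩
  · -- forward direction
    have hv' : Pi.single i v ∈ Z := hv
    have hx' : Pi.single i x ∈ Z := hx
    have := (hZ _).mp hv' _ hx'
    rw [Finset.sum_eq_single i] at this
    · simpa using this
    · intro j _ hj
      rw [Pi.single_eq_of_ne hj, Pi.single_eq_of_ne hj]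
      simp
    · simp
  · -- backward direction
    show Pi.single i v ∈ Z
    rw [hZ]
    intro x hx
    rw [Finset.sum_eq_single i]
    · rw [Pi.single_eq_same]
      have hxi : x i ∈ Z.comap (LinearMap.single A V i) := by
        show Pi.single i (x i) ∈ Z
        exact hcomp x hx
      exact hv _ hxi
    · intro j _ hj
      rw [Pi.single_eq_of_ne hj]
      simp
    · simp
end

section
/- Let M be an (A,ε)-bilinear torsion form over O_K. Then every sub-A-module U ⊆ M that is maximal among totally isotropic sub-A-modules (that is, among sub-A-modules X with X ⊆ X^⊥) satisfies π·U^⊥ ⊆ U. -/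
/-- In an `(A, ε)`-bilinear torsion form `M` over a discrete valuation ring `R` (with values in
`K/R`, `K` the fraction field), every maximal totally isotropic sub-`A`-module `U` satisfies
`π · U^⊥ ⊆ U`. -/
theorem maximal_totally_isotropic_almost_lagrangian
    {R : Type*} [CommRing R] [IsDomain R] [IsDiscreteValuationRing R]
    {K : Type*} [Field K] [Algebra R K] [IsFractionRing R K]
    (π : R) (hπ : Irreducible π)
    {A : Type*} [Ring A] [Algebra R A]
    (σ : A → A) (hσ1 : σ 1 = 1) (hσadd : ∀ a b : A, σ (a + b) = σ a + σ b)
    (hσmul : ∀ a b : A, σ (a * b) = σ b * σ a) (hσσ : ∀ a : A, σ (σ a) = a)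
    (hσR : ∀ r : R, σ (algebraMap R A r) = algebraMap R A r)
    (ε : R) (hε : ε = 1 ∨ ε = -1)
    -- the torsion module `M`, of finite length over `R`
    {M : Type*} [AddCommGroup M] [Module A M] [Module R M] [IsScalarTower R A M]
    (hlen : IsFiniteLength R M)
    -- the `K/R`-valued pairing
    (b : M →ₗ[R] M →ₗ[R] (K ⧸ LinearMap.range (Algebra.linearMap R K)))
    (hbnd : ∀ x, (∀ y, b x y = 0) → x = 0)
    (hbσ : ∀ (a : A) (x y : M), b (a • x) y = b x (σ a • y))
    (hbε : ∀ x y, b x y = ε • b y x)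
    -- `U` is a maximal totally isotropic sub-`A`-module
    (U : Submodule A M) (hU : ∀ x ∈ U, ∀ y ∈ U, b x y = 0)
    (hUmax : ∀ U' : Submodule A M, (∀ x ∈ U', ∀ y ∈ U', b x y = 0) → U ≤ U' → U' = U) :
    -- then `π · U^⊥ ⊆ U`
    ∀ m : M, (∀ x ∈ U, b m x = 0) → π • m ∈ U := by
  intro m hm
  classical
  -- R-action interacts with A-action and U
  have halg : ∀ (r : R) (x : M), r • x = (algebraMap R A r) • x := by
    intro r x; rw [algebraMap_smul]
  have hRsmul : ∀ (r : R) (x : M), x ∈ U → r • x ∈ U := by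
    intro r x hx
    rw [halg]; exact U.smul_mem _ hx
  have hcomm : ∀ (r : R) (a : A) (x : M), a • (r • x) = r • (a • x) := by
    intro r a x
    rw [halg r x, ← mul_smul, ← Algebra.commutes, mul_smul, ← halg]
  -- inductive step: if π^(n+1) • m ∈ U with n ≥ 1, then π^n • m ∈ U
  have step : ∀ n : ℕ, 1 ≤ n → π ^ (n + 1) • m ∈ U → π ^ n • m ∈ U := by
    intro n hn hmem
    set z : M := π ^ n • m with hz
    have hzperp : ∀ x ∈ U, b z x = 0 := by
      intro x hx
      rw [hz, map_smul, LinearMap.smul_apply, hm x hx, smul_zero]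
    have key : ∀ c : A, b z (c • z) = 0 := by
      intro c
      have h1 : π ^ (2 * n) • m ∈ U := by
        have he : π ^ (2 * n) • m = π ^ (n - 1) • (π ^ (n + 1) • m) := by
          rw [← mul_smul, ← pow_add]; congr 2; omega
        rw [he]; exact hRsmul _ _ hmem
      have h2 : c • (π ^ (2 * n) • m) ∈ U := U.smul_mem c h1
      calc b z (c • z) = b (π ^ n • m) (π ^ n • (c • m)) := by rw [hz, hcomm]
        _ = π ^ n • (b m) (π ^ n • (c • m)) := by rw [b.map_smul, LinearMap.smul_apply]
        _ = π ^ n • π ^ n • (b m) (c • m) := by rw [(b m).map_smul]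
        _ = π ^ (2 * n) • (b m) (c • m) := by rw [smul_smul, ← pow_add, two_mul]
        _ = (b m) (π ^ (2 * n) • (c • m)) := by rw [(b m).map_smul]
        _ = b m (c • (π ^ (2 * n) • m)) := by rw [hcomm]
        _ = 0 := hm _ h2
    set U' : Submodule A M := U ⊔ Submodule.span A {z} with hU'
    have hiso : ∀ x ∈ U', ∀ y ∈ U', b x y = 0 := by
      intro x hx y hy
      rw [hU', Submodule.mem_sup] at hx hy
      obtain ⟨u, hu, w, hw, rfl⟩ := hx
      obtain ⟨u', hu', w', hw', rfl⟩ := hy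
      obtain ⟨a, rfl⟩ := Submodule.mem_span_singleton.mp hw
      obtain ⟨a', rfl⟩ := Submodule.mem_span_singleton.mp hw'
      have t1 : b u u' = 0 := hU u hu u' hu'
      have t2 : b u (a' • z) = 0 := by
        rw [hbε, hbσ, hzperp _ (U.smul_mem _ hu), smul_zero]
      have t3 : b (a • z) u' = 0 := by
        rw [hbσ, hzperp _ (U.smul_mem _ hu')]
      have t4 : b (a • z) (a' • z) = 0 := by
        rw [hbσ, smul_smul]; exact key _
      simp only [map_add, LinearMap.add_apply, t1, t2, t3, t4, add_zero, zero_add]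
    have hEq : U' = U := hUmax U' hiso le_sup_left
    have : z ∈ U' := Submodule.mem_sup_right (Submodule.mem_span_singleton_self z)
    rwa [hEq] at this
  -- torsion: some power of π kills m
  obtain ⟨hNoeth, hArt⟩ := isFiniteLength_iff_isNoetherian_isArtinian.mp hlen
  have htor : ∃ N : ℕ, π ^ N • m = 0 := by
    let f : ℕ →o (Submodule R M)ᵒᵈ :=
      ⟨fun n => Submodule.span R {π ^ n • m}, by
        intro i j hij
        show Submodule.span R {π ^ j • m} ≤ Submodule.span R {π ^ i • m}
        apply Submodule.span_le.mpr
        intro x hx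
        rcases Set.mem_singleton_iff.mp hx with rfl
        have : π ^ j • m = π ^ (j - i) • (π ^ i • m) := by
          rw [← mul_smul, ← pow_add, Nat.sub_add_cancel hij]
        rw [this]
        exact Submodule.smul_mem _ _ (Submodule.mem_span_singleton_self _)⟩
    obtain ⟨n, hn⟩ := IsArtinian.monotone_stabilizes f
    have h2 : Submodule.span R {π ^ n • m} = Submodule.span R {π ^ (n + 1) • m} :=
      hn (n + 1) (Nat.le_succ n)
    have h1 : π ^ n • m ∈ Submodule.span R {π ^ (n + 1) • m} :=
      h2 ▸ Submodule.mem_span_singleton_self _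
    obtain ⟨r, hr⟩ := Submodule.mem_span_singleton.mp h1
    have hu : IsUnit (1 - r * π) := by
      apply IsLocalRing.isUnit_one_sub_self_of_mem_nonunits
      intro hunit
      exact hπ.not_isUnit (isUnit_of_mul_isUnit_right hunit)
    refine ⟨n, ?_⟩
    have h0 : (1 - r * π) • (π ^ n • m) = 0 := by
      have hx : (r * π) • (π ^ n • m) = π ^ n • m := by
        rw [mul_smul, smul_smul π, ← pow_succ', hr]
      rw [sub_smul, one_smul, hx, sub_self]
    exact hu.smul_eq_zero.mp h0
  obtain ⟨N, hN⟩ := htor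
  -- downward induction from N to 1
  have main : ∀ k : ℕ, ∀ n : ℕ, 1 ≤ n → N ≤ n + k → π ^ n • m ∈ U := by
    intro k
    induction k with
    | zero =>
      intro n _ hNn
      have : π ^ n • m = π ^ (n - N) • (π ^ N • m) := by
        rw [← mul_smul, ← pow_add]; congr 2; omega
      rw [this, hN, smul_zero]
      exact U.zero_mem
    | succ k ih =>
      intro n h1 hNn
      by_cases h : N ≤ n + k
      · exact ih n h1 h
      · exact step n h1 (ih (n + 1) (by omega) (by omega))
  have := main N 1 le_rfl (by omega)
  rwa [pow_one] at this
end

section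
/- Let V be an (A_K,ε)-bilinear form over K, and let Λ ⊆ V be an A-lattice that is maximal among A-lattices Λ' in V satisfying Λ' ⊆ Λ'^∨. Then Λ is almost unimodular, i.e. πΛ^∨ ⊆ Λ ⊆ Λ^∨. -/
/-- In an `(A_K, ε)`-bilinear form `V` over the fraction field `K` of a discrete valuation
ring `R`, every `A`-lattice that is maximal among `A`-lattices `Λ'` with `Λ' ⊆ Λ'^∨` is
almost unimodular: `π Λ^∨ ⊆ Λ ⊆ Λ^∨`. -/
theorem maximal_selfcontained_lattice_almost_unimodular
    {R : Type*} [CommRing R] [IsDomain R] [IsDiscreteValuationRing R]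
    {K : Type*} [Field K] [Algebra R K] [IsFractionRing R K]
    (π : R) (hπ : Irreducible π)
    {A : Type*} [Ring A] [Algebra R A]
    (σ : A → A) (hσ1 : σ 1 = 1) (hσadd : ∀ a b : A, σ (a + b) = σ a + σ b)
    (hσmul : ∀ a b : A, σ (a * b) = σ b * σ a) (hσσ : ∀ a : A, σ (σ a) = a)
    (hσR : ∀ r : R, σ (algebraMap R A r) = algebraMap R A r)
    (ε : K) (hε : ε = 1 ∨ ε = -1)
    -- `V` is an `(A_K, ε)`-bilinear form: an `A ⊗ K`-module with a suitable form
    {V : Type*} [AddCommGroup V] [Module K V] [Module A V] [Module R V]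
    [IsScalarTower R K V] [IsScalarTower R A V] [SMulCommClass K A V]
    [FiniteDimensional K V]
    (b : LinearMap.BilinForm K V)
    (hbnd : ∀ x, (∀ y, b x y = 0) → x = 0)
    (hbσ : ∀ (a : A) (x y : V), b (a • x) y = b x (σ a • y))
    (hbε : ∀ x y, b x y = ε * b y x)
    -- `Λ` is an `A`-lattice with `Λ ⊆ Λ^∨` ...
    (Λ : Submodule A V)
    (hΛfg : (Λ.restrictScalars R).FG) (hΛspan : Submodule.span K (Λ : Set V) = ⊤)
    (hΛself : ∀ x ∈ Λ, ∀ y ∈ Λ, b x y ∈ (algebraMap R K).range)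
    -- ... maximal among such lattices
    (hΛmax : ∀ Λ' : Submodule A V,
      (Λ'.restrictScalars R).FG → Submodule.span K (Λ' : Set V) = ⊤ →
      (∀ x ∈ Λ', ∀ y ∈ Λ', b x y ∈ (algebraMap R K).range) → Λ ≤ Λ' → Λ' = Λ) :
    -- then `π Λ^∨ ⊆ Λ`
    ∀ x : V, (∀ y ∈ Λ, b x y ∈ (algebraMap R K).range) → π • x ∈ Λ := by
  intro x hx
  set φ : R →+* K := algebraMap R K with hφdef
  set S : Subring K := φ.range with hSdef
  have hφinj : Function.Injective φ := IsFractionRing.injective R K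
  have hπK : φ π ≠ 0 := fun h => hπ.ne_zero (hφinj (by simpa using h))
  -- Λ is closed under R-scalars
  have hsmulΛ : ∀ (r : R) {v : V}, v ∈ Λ → r • v ∈ Λ := fun r v hv =>
    (Λ.restrictScalars R).smul_mem r hv
  -- scalar commutation
  have hAR : ∀ (a : A) (r : R) (v : V), a • (r • v) = r • (a • v) := by
    intro a r v
    rw [← algebraMap_smul A r v, ← algebraMap_smul A r (a • v), ← mul_smul, ← mul_smul,
      Algebra.commutes]
  -- bilinearity over R-scalars
  have hb1 : ∀ (r : R) (v y : V), b (r • v) y = φ r * b v y := by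
    intro r v y
    rw [← algebraMap_smul K r v, map_smul, LinearMap.smul_apply, smul_eq_mul]
  have hb2 : ∀ (r : R) (v y : V), b v (r • y) = φ r * b v y := by
    intro r v y
    rw [← algebraMap_smul K r y, map_smul, smul_eq_mul]
  -- every element of V is π-power-torsion modulo Λ
  have hdiv : ∀ c : K, ∃ (m : ℕ) (r : R), (φ π) ^ m * c = φ r := by
    intro c
    obtain ⟨⟨a, s⟩, hs⟩ := IsLocalization.surj (nonZeroDivisors R) c
    have hs0 : (s : R) ≠ 0 := nonZeroDivisors.ne_zero s.2
    obtain ⟨m, u, hu⟩ := IsDiscreteValuationRing.eq_unit_mul_pow_irreducible hs0 hπ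
    refine ⟨m, ↑u⁻¹ * a, ?_⟩
    have h1 : c * φ ↑s = φ a := hs
    rw [hu] at h1
    calc (φ π) ^ m * c
        = φ ↑u⁻¹ * φ ↑u * ((φ π) ^ m * c) := by
          rw [← map_mul, Units.inv_mul, map_one, one_mul]
      _ = φ ↑u⁻¹ * (c * φ (↑u * π ^ m)) := by rw [map_mul, map_pow]; ring
      _ = φ ↑u⁻¹ * φ a := by rw [h1]
      _ = φ (↑u⁻¹ * a) := (map_mul φ _ _).symm
  have htor : ∀ v : V, ∃ n : ℕ, (π ^ n : R) • v ∈ Λ := by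
    intro v
    have hv : v ∈ Submodule.span K (Λ : Set V) := hΛspan ▸ Submodule.mem_top
    induction hv using Submodule.span_induction with
    | mem v hv => exact ⟨0, by simpa using hv⟩
    | zero => exact ⟨0, by simp⟩
    | add v w _ _ ihv ihw =>
      obtain ⟨n, hn⟩ := ihv
      obtain ⟨m, hm⟩ := ihw
      refine ⟨n + m, ?_⟩
      rw [smul_add]
      have h1 : (π ^ (n + m) : R) • v = π ^ m • ((π ^ n : R) • v) := by
        rw [← mul_smul, ← pow_add, Nat.add_comm]
      have h2 : (π ^ (n + m) : R) • w = π ^ n • ((π ^ m : R) • w) := by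
        rw [← mul_smul, ← pow_add]
      rw [h1, h2]
      exact Λ.add_mem (hsmulΛ _ hn) (hsmulΛ _ hm)
    | smul c v _ ihv =>
      obtain ⟨n, hn⟩ := ihv
      obtain ⟨m, r, hmr⟩ := hdiv c
      refine ⟨n + m, ?_⟩
      have h1 : (π ^ (n + m) : R) • (c • v) = r • ((π ^ n : R) • v) := by
        rw [← algebraMap_smul K (π ^ (n + m) : R) (c • v),
          ← algebraMap_smul K (π ^ n : R) v, ← algebraMap_smul K r, smul_smul, smul_smul]
        congr 1
        rw [map_pow, map_pow, pow_add]
        linear_combination (φ π) ^ n * hmr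
      rw [h1]
      exact hsmulΛ r hn
  -- a finitely generated R-module containing the dual lattice
  have hnd : b.Nondegenerate := LinearMap.BilinForm.Nondegenerate.ofSeparatingLeft hbnd
  let e : Module.Basis (Fin (Module.finrank K V)) K V := Module.finBasis K V
  let f : Module.Basis (Fin (Module.finrank K V)) K V := b.dualBasis hnd e
  choose nn hnn using fun j => htor (e j)
  set m : ℕ := Finset.univ.sup nn with hmdef
  have hm : ∀ j, (π ^ m : R) • e j ∈ Λ := by
    intro j
    have hle : nn j ≤ m := Finset.le_sup (Finset.mem_univ j)
    have : (π ^ m : R) • e j = π ^ (m - nn j) • ((π ^ nn j : R) • e j) := by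
      rw [← mul_smul, ← pow_add, Nat.sub_add_cancel hle]
    rw [this]
    exact hsmulΛ _ (hnn j)
  set u : K := ((φ π) ^ m)⁻¹ with hudef
  set D : Submodule R V := Submodule.span R (Set.range fun j => u • f j) with hDdef
  have hD : ∀ v : V, (∀ y ∈ Λ, b v y ∈ S) → v ∈ D := by
    intro v hv
    have h1 : v = ∑ j, f.repr v j • f j := (f.sum_repr v).symm
    rw [h1]
    refine Submodule.sum_mem _ fun j _ => ?_
    obtain ⟨r, hr⟩ : (φ π) ^ m * b v (e j) ∈ S := by
      have := hv _ (hm j)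
      rwa [hb2, map_pow] at this
    have hc : f.repr v j • f j = r • (u • f j) := by
      rw [LinearMap.BilinForm.dualBasis_repr_apply, ← algebraMap_smul K r, smul_smul]
      congr 1
      have hne : (φ π) ^ m ≠ 0 := pow_ne_zero _ hπK
      rw [hudef, eq_comm, mul_inv_eq_iff_eq_mul₀ hne]
      linear_combination hr
    rw [hc]
    exact Submodule.smul_mem _ _ (Submodule.subset_span (Set.mem_range_self j))
  have hDfg : D.FG := Submodule.fg_span (Set.finite_range _)
  have hfg_of_le : ∀ N : Submodule R V, N ≤ D → N.FG := by
    intro N hN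
    haveI : IsNoetherian R D := isNoetherian_of_fg_of_noetherian D hDfg
    have h1 : (Submodule.comap D.subtype N).FG := IsNoetherian.noetherian _
    have h2 := h1.map D.subtype
    rwa [Submodule.map_comap_subtype, inf_eq_right.mpr hN] at h2
  -- membership of useful elements in S
  have hπS : φ π ∈ S := ⟨π, rfl⟩
  have hεS : ε ∈ S := by
    rcases hε with h | h <;> subst h
    · exact ⟨1, map_one φ⟩
    · exact ⟨-1, by simp⟩
  -- key step: if z is in the dual and π² z ∈ Λ then π z ∈ Λ
  have key : ∀ z : V, (∀ y ∈ Λ, b z y ∈ S) → (π ^ 2 : R) • z ∈ Λ → (π : R) • z ∈ Λ := by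
    intro z hzd hz2
    set w : V := (π : R) • z with hw
    set Λ' : Submodule A V := Λ ⊔ Submodule.span A {w} with hΛ'
    have hwdual : ∀ y ∈ Λ, b w y ∈ S := by
      intro y hy
      rw [hw, hb1]
      exact mul_mem hπS (hzd y hy)
    have haw_dual : ∀ (a : A), ∀ y ∈ Λ, b (a • w) y ∈ S := by
      intro a y hy
      rw [hbσ]
      exact hwdual _ (Λ.smul_mem (σ a) hy)
    have hyaw : ∀ (a : A), ∀ y ∈ Λ, b y (a • w) ∈ S := by
      intro a y hy
      rw [hbε]
      exact mul_mem hεS (haw_dual a y hy)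
    have haww : ∀ a a' : A, b (a • w) (a' • w) ∈ S := by
      intro a a'
      rw [hbσ, ← mul_smul]
      set c : A := σ a * a' with hc
      have h1 : (c • w : V) = (π : R) • (c • z) := by rw [hw, hAR]
      have h2 : b w (c • w) = φ π * (φ π * b z (c • z)) := by
        rw [h1, hw, hb1, hb2]
      have h3 : φ π * (φ π * b z (c • z)) = b z (c • ((π ^ 2 : R) • z)) := by
        rw [hAR, hb2, pow_two, map_mul, mul_assoc]
      rw [h2, h3]
      exact hzd _ (Λ.smul_mem c hz2)
    have hmem : ∀ v ∈ Λ', ∃ y ∈ Λ, ∃ a : A, v = y + a • w := by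
      intro v hv
      rw [hΛ', Submodule.mem_sup] at hv
      obtain ⟨y, hy, t, ht, rfl⟩ := hv
      obtain ⟨a, rfl⟩ := Submodule.mem_span_singleton.mp ht
      exact ⟨y, hy, a, rfl⟩
    have hpair : ∀ v ∈ Λ', ∀ v' ∈ Λ', b v v' ∈ S := by
      intro v hv v' hv'
      obtain ⟨y, hy, a, rfl⟩ := hmem v hv
      obtain ⟨y', hy', a', rfl⟩ := hmem v' hv'
      have hexp : b (y + a • w) (y' + a' • w)
          = b y y' + b y (a' • w) + (b (a • w) y' + b (a • w) (a' • w)) := by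
        simp only [map_add, LinearMap.add_apply]
        ring
      rw [hexp]
      exact add_mem (add_mem (hΛself y hy y' hy') (hyaw a' y hy))
        (add_mem (haw_dual a y' hy') (haww a a'))
    have hsub : Λ'.restrictScalars R ≤ D := by
      intro v hv
      obtain ⟨y, hy, a, rfl⟩ := hmem v hv
      apply hD
      intro t ht
      have hsplit : b (y + a • w) t = b y t + b (a • w) t := by
        simp only [map_add, LinearMap.add_apply]
      rw [hsplit]
      exact add_mem (hΛself y hy t ht) (haw_dual a t ht)
    have hfg' : (Λ'.restrictScalars R).FG := hfg_of_le _ hsub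
    have hspan' : Submodule.span K (Λ' : Set V) = ⊤ := by
      rw [eq_top_iff, ← hΛspan]
      exact Submodule.span_mono fun t ht => Submodule.mem_sup_left ht
    have heq := hΛmax Λ' hfg' hspan' hpair le_sup_left
    have hwΛ : w ∈ Λ := heq ▸ Submodule.mem_sup_right (Submodule.mem_span_singleton_self w)
    exact hwΛ
  -- conclude by descending induction
  obtain ⟨n, hn⟩ := htor x
  have main : ∀ n : ℕ, (π ^ n : R) • x ∈ Λ → π • x ∈ Λ := by
    intro n
    induction n with
    | zero => intro h; exact hsmulΛ π (by simpa using h)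
    | succ k ih =>
      intro h
      cases k with
      | zero => simpa [pow_one] using h
      | succ l =>
        apply ih
        have hz : ∀ y ∈ Λ, b ((π ^ l : R) • x) y ∈ S := by
          intro y hy
          rw [hb1, map_pow]
          exact mul_mem (pow_mem hπS l) (hx y hy)
        have h2 : (π ^ 2 : R) • ((π ^ l : R) • x) ∈ Λ := by
          rw [← mul_smul, ← pow_add]
          have hll : 2 + l = l + 1 + 1 := by ring
          rw [hll]
          exact h
        have h3 := key _ hz h2
        rw [← mul_smul, ← pow_succ'] at h3
        exact h3
  exact main n hn
end

section
/- Let V be an (A_K,ε)-bilinear form over K, and let Λ₀ and Λ₁ be A-lattices in V with Λ₀ ⊆ Λ₀^∨ and Λ₁ ⊆ Λ₁^∨. Then the (A,ε)-bilinear torsion form (Λ₀^∨/Λ₀)(-1) ⊕ (Λ₁^∨/Λ₁) is neutral; equivalently, the torsion forms Λ₀^∨/Λ₀ and Λ₁^∨/Λ₁ are Witt equivalent. -/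
open LinearMap (BilinForm)

set_option linter.unusedSectionVars false

section aux

variable {R : Type*} [CommRing R] [IsDomain R] [IsPrincipalIdealRing R]
  {K : Type*} [Field K] [Algebra R K] [IsFractionRing R K]
  {V : Type*} [AddCommGroup V] [Module K V] [Module R V] [IsScalarTower R K V]

lemma my_nzsd (K : Type*) [Field K] [Algebra R K] [IsFractionRing R K] [Module K V]
    [IsScalarTower R K V] : NoZeroSMulDivisors R V := by
  constructor
  intro r x h
  rcases eq_or_ne r 0 with rfl | hr
  · exact Or.inl rfl
  · right
    have h' : (algebraMap R K r) • x = 0 := by rwa [algebraMap_smul]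
    have hr' : algebraMap R K r ≠ 0 := fun h0 => hr (IsFractionRing.injective R K (by simpa using h0))
    exact (smul_eq_zero.mp h').resolve_left hr'

lemma double_dual_lattice (B : BilinForm K V) (hB : B.Nondegenerate)
    (N : Submodule R V) (hfg : N.FG) (hspan : Submodule.span K (N : Set V) = ⊤) :
    B.flip.dualSubmodule (B.dualSubmodule N) = N := by
  have hnzd : NoZeroSMulDivisors R V := my_nzsd K
  have : Module.Finite R N := Module.Finite.iff_fg.mpr hfg
  let ι := Module.Free.ChooseBasisIndex R N
  let bN : Module.Basis ι R N := Module.Free.chooseBasis R N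
  let v : ι → V := fun i => (bN i : V)
  have hli : LinearIndependent R v :=
    bN.linearIndependent.map' N.subtype (Submodule.ker_subtype N)
  have hliK : LinearIndependent K v := (LinearIndependent.iff_fractionRing R K).mp hli
  have hNspan : N = Submodule.span R (Set.range v) := by
    have : Set.range v = N.subtype '' Set.range bN := by
      ext x; simp [v, Set.range_comp]
    rw [this, ← Submodule.map_span, bN.span_eq, Submodule.map_top, Submodule.range_subtype]
  have hsp : ⊤ ≤ Submodule.span K (Set.range v) := by
    rw [← hspan]
    apply Submodule.span_le.mpr
    intro x hx
    have : x ∈ Submodule.span R (Set.range v) := hNspan ▸ hx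
    exact Submodule.span_subset_span R K _ this
  have hv : N = Submodule.span R (Set.range ⇑(Module.Basis.mk hliK hsp)) := by
    rw [Module.Basis.coe_mk]; exact hNspan
  rw [hv]
  exact B.dualSubmodule_flip_dualSubmodule_of_basis hB (Module.Basis.mk hliK hsp)

lemma dualSubmodule_sup' (B : BilinForm K V) (N N' : Submodule R V) :
    B.dualSubmodule (N ⊔ N') = B.dualSubmodule N ⊓ B.dualSubmodule N' := by
  ext x
  simp only [LinearMap.BilinForm.mem_dualSubmodule, Submodule.mem_inf]
  constructor
  · intro h
    exact ⟨fun y hy => h y (Submodule.mem_sup_left hy),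
      fun y hy => h y (Submodule.mem_sup_right hy)⟩
  · rintro ⟨h1, h2⟩ y hy
    obtain ⟨y₁, hy₁, y₂, hy₂, rfl⟩ := Submodule.mem_sup.mp hy
    rw [map_add]
    exact add_mem (h1 y₁ hy₁) (h2 y₂ hy₂)

end aux

/-- Independence of the discriminant torsion form of the chosen lattice: if `Λ₀` and `Λ₁` are
`A`-lattices in an `(A_K, ε)`-bilinear form `V` with `Λᵢ ⊆ Λᵢ^∨`, then the torsion form
`(Λ₀^∨/Λ₀)(-1) ⊕ (Λ₁^∨/Λ₁)` is neutral; its lagrangian is described by its preimage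
`Y ⊆ Λ₀^∨ × Λ₁^∨` containing `Λ₀ × Λ₁`. -/
theorem discriminant_torsion_forms_witt_equivalent
    {R : Type*} [CommRing R] [IsDomain R] [IsDiscreteValuationRing R]
    {K : Type*} [Field K] [Algebra R K] [IsFractionRing R K]
    (π : R) (hπ : Irreducible π)
    {A : Type*} [Ring A] [Algebra R A]
    (σ : A → A) (hσ1 : σ 1 = 1) (hσadd : ∀ a b : A, σ (a + b) = σ a + σ b)
    (hσmul : ∀ a b : A, σ (a * b) = σ b * σ a) (hσσ : ∀ a : A, σ (σ a) = a)
    (hσR : ∀ r : R, σ (algebraMap R A r) = algebraMap R A r)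
    (ε : K) (hε : ε = 1 ∨ ε = -1)
    {V : Type*} [AddCommGroup V] [Module K V] [Module A V] [Module R V]
    [IsScalarTower R K V] [IsScalarTower R A V] [SMulCommClass K A V]
    [FiniteDimensional K V]
    (b : LinearMap.BilinForm K V)
    (hbnd : ∀ x, (∀ y, b x y = 0) → x = 0)
    (hbσ : ∀ (a : A) (x y : V), b (a • x) y = b x (σ a • y))
    (hbε : ∀ x y, b x y = ε * b y x)
    -- `Λ₀` and `Λ₁` are `A`-lattices with `Λᵢ ⊆ Λᵢ^∨`
    (Λ₀ : Submodule A V)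
    (hΛ₀fg : (Λ₀.restrictScalars R).FG) (hΛ₀span : Submodule.span K (Λ₀ : Set V) = ⊤)
    (hΛ₀self : ∀ x ∈ Λ₀, ∀ y ∈ Λ₀, b x y ∈ (algebraMap R K).range)
    (Λ₁ : Submodule A V)
    (hΛ₁fg : (Λ₁.restrictScalars R).FG) (hΛ₁span : Submodule.span K (Λ₁ : Set V) = ⊤)
    (hΛ₁self : ∀ x ∈ Λ₁, ∀ y ∈ Λ₁, b x y ∈ (algebraMap R K).range) :
    -- then `(Λ₀^∨/Λ₀)(-1) ⊕ (Λ₁^∨/Λ₁)` is neutral, with lagrangian given by its preimage `Y`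
    ∃ Y : Submodule A (V × V),
      Λ₀.prod Λ₁ ≤ Y ∧
      (∀ v : V × V, v ∈ Y ↔
        (((∀ y ∈ Λ₀, b v.1 y ∈ (algebraMap R K).range) ∧
          (∀ y ∈ Λ₁, b v.2 y ∈ (algebraMap R K).range)) ∧
        ∀ x ∈ Y, -(b v.1 x.1) + b v.2 x.2 ∈ (algebraMap R K).range)) := by
  classical
  -- basic conversions
  have hone : ∀ t : K, t ∈ (1 : Submodule R K) ↔ t ∈ (algebraMap R K).range := by
    intro t; rw [Submodule.mem_one]; rfl
  have hεmem : ∀ t : K, t ∈ (algebraMap R K).range → ε * t ∈ (algebraMap R K).range := by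
    intro t ht
    rcases hε with rfl | rfl
    · rwa [one_mul]
    · rw [neg_one_mul]; exact neg_mem ht
  -- duals as R-submodules
  set D0 : Submodule R V := b.dualSubmodule (Λ₀.restrictScalars R) with hD0
  set D1 : Submodule R V := b.dualSubmodule (Λ₁.restrictScalars R) with hD1
  set L : Submodule R V := (Λ₀ ⊔ Λ₁).restrictScalars R with hL
  have hmemD0 : ∀ x : V, x ∈ D0 ↔ ∀ y ∈ Λ₀, b x y ∈ (algebraMap R K).range := by
    intro x
    constructor
    · intro hx y hy; exact (hone _).mp (hx y hy)
    · intro hx y hy; exact (hone _).mpr (hx y hy)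
  have hmemD1 : ∀ x : V, x ∈ D1 ↔ ∀ y ∈ Λ₁, b x y ∈ (algebraMap R K).range := by
    intro x
    constructor
    · intro hx y hy; exact (hone _).mp (hx y hy)
    · intro hx y hy; exact (hone _).mpr (hx y hy)
  have hΛ₀D : ∀ x ∈ Λ₀, x ∈ D0 := fun x hx => (hmemD0 x).mpr (hΛ₀self x hx)
  have hΛ₁D : ∀ x ∈ Λ₁, x ∈ D1 := fun x hx => (hmemD1 x).mpr (hΛ₁self x hx)
  -- `L` decomposition
  have hmemL : ∀ x : V, x ∈ L ↔ ∃ a ∈ Λ₀, ∃ c ∈ Λ₁, a + c = x := by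
    intro x
    rw [hL, Submodule.restrictScalars_mem, Submodule.mem_sup]
  -- the lagrangian
  refine ⟨{ carrier := {v : V × V | v.1 ∈ D0 ∧ v.2 ∈ D1 ∧ v.1 - v.2 ∈ L}
            add_mem' := by
              rintro ⟨x1, x2⟩ ⟨y1, y2⟩ ⟨hx1, hx2, hx3⟩ ⟨hy1, hy2, hy3⟩
              refine ⟨add_mem hx1 hy1, add_mem hx2 hy2, ?_⟩
              show x1 + y1 - (x2 + y2) ∈ L
              have : x1 + y1 - (x2 + y2) = (x1 - x2) + (y1 - y2) := by abel
              rw [this]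
              exact add_mem hx3 hy3
            zero_mem' := ⟨zero_mem _, zero_mem _, by simp⟩
            smul_mem' := by
              rintro a ⟨x1, x2⟩ ⟨hx1, hx2, hx3⟩
              refine ⟨?_, ?_, ?_⟩
              · intro y hy
                show b (a • x1) y ∈ (1 : Submodule R K)
                rw [hbσ a x1 y]
                exact hx1 (σ a • y) (Λ₀.smul_mem (σ a) hy)
              · intro y hy
                show b (a • x2) y ∈ (1 : Submodule R K)
                rw [hbσ a x2 y]
                exact hx2 (σ a • y) (Λ₁.smul_mem (σ a) hy)
              · show a • x1 - a • x2 ∈ L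
                rw [← smul_sub]
                exact (Λ₀ ⊔ Λ₁).smul_mem a hx3 }, ?_, ?_⟩
  · rintro ⟨x1, x2⟩ ⟨hx1, hx2⟩
    exact ⟨hΛ₀D x1 hx1, hΛ₁D x2 hx2,
      (hmemL _).mpr ⟨x1, hx1, -x2, Λ₁.neg_mem hx2, by abel⟩⟩
  · intro v
    constructor
    · -- forward direction : Y is isotropic
      rintro ⟨hv1, hv2, hv3⟩
      refine ⟨⟨(hmemD0 v.1).mp hv1, (hmemD1 v.2).mp hv2⟩, ?_⟩
      rintro x ⟨hx1, hx2, hx3⟩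
      obtain ⟨a, ha, c, hc, hac⟩ := (hmemL _).mp hv3
      obtain ⟨a', ha', c', hc', hac'⟩ := (hmemL _).mp hx3
      set m := v.1 - a with hm
      set m' := x.1 - a' with hm'
      have hm0 : m ∈ D0 := sub_mem hv1 (hΛ₀D a ha)
      have hm'0 : m' ∈ D0 := sub_mem hx1 (hΛ₀D a' ha')
      have e2 : v.2 = m - c := by
        rw [hm]
        have : a + c = v.1 - v.2 := hac
        rw [eq_comm, sub_sub, this]
        abel
      have e2' : x.2 = m' - c' := by
        rw [hm']
        have : a' + c' = x.1 - x.2 := hac'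
        rw [eq_comm, sub_sub, this]
        abel
      have hm1 : m ∈ D1 := by rw [show m = v.2 + c by rw [e2]; abel]; exact add_mem hv2 (hΛ₁D c hc)
      have hm'1 : m' ∈ D1 := by
        rw [show m' = x.2 + c' by rw [e2']; abel]; exact add_mem hx2 (hΛ₁D c' hc')
      have e1 : v.1 = m + a := by rw [hm]; abel
      have e1' : x.1 = m' + a' := by rw [hm']; abel
      have key : -(b v.1 x.1) + b v.2 x.2
          = -(b m a') + (-(b a m') + (-(b a a') + (-(b m c') + (-(b c m') + b c c')))) := by
        rw [e1, e2, e1', e2']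
        simp only [map_add, map_sub, LinearMap.add_apply, LinearMap.sub_apply]
        ring
      rw [key]
      refine add_mem (neg_mem ?_) (add_mem (neg_mem ?_) (add_mem (neg_mem ?_)
        (add_mem (neg_mem ?_) (add_mem (neg_mem ?_) ?_))))
      · exact (hmemD0 m).mp hm0 a' ha'
      · rw [hbε a m']
        exact hεmem _ ((hmemD0 m').mp hm'0 a ha)
      · exact hΛ₀self a ha a' ha'
      · exact (hmemD1 m).mp hm1 c' hc'
      · rw [hbε c m']
        exact hεmem _ ((hmemD1 m').mp hm'1 c hc)
      · exact hΛ₁self c hc c' hc'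
    · -- backward direction : the orthogonal of Y is contained in Y
      rintro ⟨⟨h1, h2⟩, h3⟩
      have hv1 : v.1 ∈ D0 := (hmemD0 v.1).mpr h1
      have hv2 : v.2 ∈ D1 := (hmemD1 v.2).mpr h2
      refine ⟨hv1, hv2, ?_⟩
      -- nondegeneracy and lattice facts
      have hnd : b.Nondegenerate := LinearMap.BilinForm.Nondegenerate.ofSeparatingLeft hbnd
      have hLeq : L = Λ₀.restrictScalars R ⊔ Λ₁.restrictScalars R := by
        apply le_antisymm
        · intro x hx
          obtain ⟨a, ha, c, hc, rfl⟩ := (hmemL x).mp hx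
          exact Submodule.add_mem_sup ha hc
        · apply sup_le
          · intro x hx; exact (hmemL x).mpr ⟨x, hx, 0, zero_mem _, by simp⟩
          · intro x hx; exact (hmemL x).mpr ⟨0, zero_mem _, x, hx, by simp⟩
      have hLfg : L.FG := by rw [hLeq]; exact Submodule.FG.sup hΛ₀fg hΛ₁fg
      have hLspan : Submodule.span K (L : Set V) = ⊤ := by
        apply top_unique
        rw [← hΛ₀span]
        apply Submodule.span_mono
        intro x hx
        exact (hmemL x).mpr ⟨x, hx, 0, zero_mem _, by simp⟩
      -- the flip of b has the same dual submodules
      have hsym : ∀ x y : V, b x y ∈ (1 : Submodule R K) ↔ b y x ∈ (1 : Submodule R K) := by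
        intro x y
        rcases hε with rfl | rfl
        · rw [hbε x y, one_mul]
        · rw [hbε x y, neg_one_mul, Submodule.neg_mem_iff]
      have hflipdual : ∀ N : Submodule R V, b.flip.dualSubmodule N = b.dualSubmodule N := by
        intro N
        ext x
        simp only [LinearMap.BilinForm.mem_dualSubmodule, LinearMap.flip_apply]
        exact forall₂_congr fun y _ => (hsym x y).symm
      -- v.2 - v.1 lies in the double dual of L
      have hdd : b.dualSubmodule (b.dualSubmodule L) = L := by
        rw [← hflipdual]
        exact double_dual_lattice b hnd L hLfg hLspan
      have hDinf : b.dualSubmodule L = D0 ⊓ D1 := by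
        rw [hLeq, dualSubmodule_sup' b]
      have hmem : v.2 - v.1 ∈ b.dualSubmodule (b.dualSubmodule L) := by
        intro m hm
        rw [hDinf] at hm
        have hmm : ((m, m) : V × V) ∈ ({v : V × V | v.1 ∈ D0 ∧ v.2 ∈ D1 ∧ v.1 - v.2 ∈ L} :
            Set (V × V)) := ⟨hm.1, hm.2, by simp⟩
        have h := h3 (m, m) hmm
        have e : b (v.2 - v.1) m = -(b v.1 m) + b v.2 m := by
          simp only [map_sub, LinearMap.sub_apply]
          ring
        rw [e]
        exact (hone _).mpr h
      rw [hdd] at hmem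
      have : -(v.2 - v.1) ∈ L := neg_mem hmem
      rwa [neg_sub] at this
end

section
/- Let V be a neutral (A_K,ε)-bilinear form over K, and let Λ ⊆ V be an A-lattice with Λ ⊆ Λ^∨. Then the (A,ε)-bilinear torsion form Λ^∨/Λ is neutral; in fact, if X ⊆ V is a lagrangian, then the image of (X ∩ Λ^∨) in Λ^∨/Λ is a lagrangian. -/
open Module

theorem aux_lagrangian_lattice
    {R : Type*} [CommRing R] [IsDomain R] [IsPrincipalIdealRing R]
    {K : Type*} [Field K] [Algebra R K] [IsFractionRing R K]
    {V : Type*} [AddCommGroup V] [Module K V] [Module R V] [IsScalarTower R K V]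
    [FiniteDimensional K V]
    (b : LinearMap.BilinForm K V)
    (hbnd : ∀ x, (∀ y, b x y = 0) → x = 0)
    {ε : K} (hε : ε = 1 ∨ ε = -1) (hbε : ∀ x y, b x y = ε * b y x)
    (X : Submodule K V)
    (hXlag : ∀ v : V, v ∈ X ↔ ∀ x ∈ X, b v x = 0)
    (L : Submodule R V) (hLfg : L.FG) (hLspan : Submodule.span K (L : Set V) = ⊤)
    (v : V)
    (hv1 : ∀ x : V, x ∈ X → (∀ y ∈ L, b x y ∈ (algebraMap R K).range) →
      b x v ∈ (algebraMap R K).range) :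
    ∃ x ∈ X, ∃ l ∈ L, v = x + l := by
  classical
  have hε0 : ε ≠ 0 := by rcases hε with h | h <;> simp [h]
  -- the pairing between X and V ⧸ X
  set F : V →ₗ[K] (X →ₗ[K] K) := b.flip.compl₂ X.subtype with hF
  have hFapp : ∀ (w : V) (x : X), F w x = b x w := fun w x => rfl
  have hFX : X ≤ LinearMap.ker F := by
    intro y hy
    rw [LinearMap.mem_ker]
    ext x
    exact (hXlag x.1).1 x.2 y hy
  set Φ : (V ⧸ X) →ₗ[K] (X →ₗ[K] K) := X.liftQ F hFX with hΦ
  have hΦapp : ∀ (w : V) (x : X), Φ (X.mkQ w) x = b x w := fun w x => rfl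
  have hΦinj : Function.Injective Φ := by
    rw [← LinearMap.ker_eq_bot]
    refine Submodule.ker_liftQ_eq_bot X F hFX ?_
    intro w hw
    rw [LinearMap.mem_ker] at hw
    rw [hXlag]
    intro x hx
    have : b x w = 0 := by
      have := congrArg (fun g => g ⟨x, hx⟩) hw
      simpa [hFapp] using this
    have := (hbε x w).symm.trans this
    exact (mul_eq_zero.mp this).resolve_left hε0
  have hΨinj : Function.Injective Φ.flip := by
    rw [← LinearMap.ker_eq_bot, LinearMap.ker_eq_bot']
    intro x hx
    have : x.1 = 0 := by
      refine hbnd x.1 fun y => ?_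
      have := congrArg (fun g => g (X.mkQ y)) hx
      exact (hΦapp y x).symm.trans this
    exact Subtype.ext this
  -- dimension count
  have hd1 : finrank K (V ⧸ X) ≤ finrank K X := by
    have := LinearMap.finrank_le_finrank_of_injective hΦinj
    simpa [Subspace.dual_finrank_eq] using this
  have hd2 : finrank K X ≤ finrank K (V ⧸ X) := by
    have := LinearMap.finrank_le_finrank_of_injective hΨinj
    simpa [Subspace.dual_finrank_eq] using this
  have hdim : finrank K X = finrank K ((V ⧸ X) →ₗ[K] K) := by
    have : finrank K ((V ⧸ X) →ₗ[K] K) = finrank K (V ⧸ X) :=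
      Subspace.dual_finrank_eq
    omega
  have hΨsurj : Function.Surjective Φ.flip := by
    intro φ
    obtain ⟨x, hx⟩ := (Φ.flip.linearEquivOfInjective hΨinj hdim).surjective φ
    exact ⟨x, by rw [← LinearMap.linearEquivOfInjective_apply hΨinj hdim]; exact hx⟩
  -- the image lattice in V ⧸ X
  have hNZ : NoZeroSMulDivisors R (V ⧸ X) := by
    refine ⟨fun {r} {u} h => ?_⟩
    rw [← algebraMap_smul K r u] at h
    rcases smul_eq_zero.mp h with h | h
    · exact Or.inl ((map_eq_zero_iff _ (IsFractionRing.injective R K)).mp h)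
    · exact Or.inr h
  set M : Submodule R (V ⧸ X) := L.map (X.mkQ.restrictScalars R) with hM
  have hMfin : Module.Finite R M := Module.Finite.iff_fg.mpr (hLfg.map _)
  have hMfree : Module.Free R M := Module.free_of_finite_type_torsion_free'
  set ι := Module.Free.ChooseBasisIndex R M with hι
  set c : Basis ι R M := Module.Free.chooseBasis R M with hc
  set e : ι → (V ⧸ X) := fun i => M.subtype (c i) with he
  have heM : ∀ i, e i ∈ M := fun i => (c i).2
  have hMspan : Submodule.span R (Set.range e) = M := by
    have h1 := congrArg (Submodule.map M.subtype) c.span_eq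
    rw [Submodule.map_span, Submodule.map_top, Submodule.range_subtype] at h1
    rw [← Set.range_comp] at h1
    exact h1
  have hein : LinearIndependent K e :=
    (LinearIndependent.iff_fractionRing R K).mp
      (c.linearIndependent.map' M.subtype M.ker_subtype)
  have hespan : Submodule.span K (Set.range e) = ⊤ := by
    have h1 : Submodule.span K (M : Set (V ⧸ X)) = ⊤ := by
      have h2 : (M : Set (V ⧸ X)) = X.mkQ '' (L : Set V) := rfl
      rw [h2, ← Submodule.map_span, hLspan, Submodule.map_top, Submodule.range_mkQ]
    refine top_unique ?_
    rw [← h1]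
    refine Submodule.span_le.mpr ?_
    intro m hm
    rw [← hMspan] at hm
    exact Submodule.span_subset_span R K _ hm
  set bU : Basis ι K (V ⧸ X) := Basis.mk hein (le_of_eq hespan.symm) with hbU
  have hbUe : ∀ i, bU i = e i := fun i => Basis.mk_apply hein _ i
  -- coordinates of elements of M are integral
  have hrepr : ∀ m ∈ M, ∀ i, bU.repr m i ∈ (algebraMap R K).range := by
    intro m hm i
    rw [← hMspan] at hm
    induction hm using Submodule.span_induction with
    | mem x hx =>
      obtain ⟨j, rfl⟩ := hx
      rw [← hbUe j, bU.repr_self]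
      rw [Finsupp.single_apply]
      split
      · exact ⟨1, map_one _⟩
      · exact ⟨0, map_zero _⟩
    | zero => simp only [map_zero, Finsupp.coe_zero, Pi.zero_apply]; exact ⟨0, map_zero _⟩
    | add x y hx hy ihx ihy =>
      rw [map_add]
      exact add_mem ihx ihy
    | smul r x hx ih =>
      rw [← algebraMap_smul K r x, map_smul]
      exact mul_mem ⟨r, rfl⟩ ih
  -- the dual family in X
  choose f hf using fun i => hΨsurj (bU.coord i)
  -- the coordinates of mkQ v are integral
  have hcoord : ∀ i, bU.repr (X.mkQ v) i ∈ (algebraMap R K).range := by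
    intro i
    have h1 : b (f i).1 v = bU.repr (X.mkQ v) i := by
      have := congrArg (fun g => g (X.mkQ v)) (hf i)
      simpa [Module.Basis.coord_apply] using (hΦapp v (f i)).symm.trans this
    rw [← h1]
    refine hv1 (f i).1 (f i).2 fun y hy => ?_
    have h2 : b (f i).1 y = bU.repr (X.mkQ y) i := by
      have := congrArg (fun g => g (X.mkQ y)) (hf i)
      simpa [Module.Basis.coord_apply] using (hΦapp y (f i)).symm.trans this
    rw [h2]
    exact hrepr _ ⟨y, hy, rfl⟩ i
  -- conclude: mkQ v ∈ M
  have hvM : X.mkQ v ∈ M := by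
    rw [← hMspan]
    rw [← bU.sum_repr (X.mkQ v)]
    refine Submodule.sum_mem _ fun i _ => ?_
    obtain ⟨r, hr⟩ := hcoord i
    rw [← hr, hbUe i, algebraMap_smul]
    exact Submodule.smul_mem _ r (Submodule.subset_span ⟨i, rfl⟩)
  obtain ⟨l, hl, hlv⟩ := hvM
  have hxX : v - l ∈ X := by
    have : X.mkQ (l - v) = 0 := by
      rw [map_sub]
      rw [show X.mkQ.restrictScalars R l = X.mkQ l from rfl] at hlv
      rw [hlv, sub_self]
    have := (Submodule.Quotient.mk_eq_zero X).mp this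
    simpa using X.neg_mem this
  exact ⟨v - l, hxX, l, hl, by abel⟩
/-- If `V` is a neutral `(A_K, ε)`-bilinear form and `Λ ⊆ Λ^∨` is an `A`-lattice, then the
discriminant torsion form `Λ^∨/Λ` is neutral; in fact, if `X` is a lagrangian of `V`, then the
image of `X ∩ Λ^∨` in `Λ^∨/Λ` is a lagrangian (described below via its preimage
`(X ∩ Λ^∨) + Λ`). -/
theorem discriminant_of_lattice_in_neutral_form_is_neutral
    {R : Type*} [CommRing R] [IsDomain R] [IsDiscreteValuationRing R]
    {K : Type*} [Field K] [Algebra R K] [IsFractionRing R K]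
    (π : R) (hπ : Irreducible π)
    {A : Type*} [Ring A] [Algebra R A]
    (σ : A → A) (hσ1 : σ 1 = 1) (hσadd : ∀ a b : A, σ (a + b) = σ a + σ b)
    (hσmul : ∀ a b : A, σ (a * b) = σ b * σ a) (hσσ : ∀ a : A, σ (σ a) = a)
    (hσR : ∀ r : R, σ (algebraMap R A r) = algebraMap R A r)
    (ε : K) (hε : ε = 1 ∨ ε = -1)
    {V : Type*} [AddCommGroup V] [Module K V] [Module A V] [Module R V]
    [IsScalarTower R K V] [IsScalarTower R A V] [SMulCommClass K A V]
    [FiniteDimensional K V]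
    (b : LinearMap.BilinForm K V)
    (hbnd : ∀ x, (∀ y, b x y = 0) → x = 0)
    (hbσ : ∀ (a : A) (x y : V), b (a • x) y = b x (σ a • y))
    (hbε : ∀ x y, b x y = ε * b y x)
    -- `X` is a lagrangian of `V` (a sub-`A_K`-module with `X = X^⊥`)
    (X : Submodule A V) (hXK : ∀ (c : K), ∀ x ∈ X, c • x ∈ X)
    (hXlag : ∀ v : V, v ∈ X ↔ ∀ x ∈ X, b v x = 0)
    -- `Λ` is an `A`-lattice with `Λ ⊆ Λ^∨`
    (Λ : Submodule A V)
    (hΛfg : (Λ.restrictScalars R).FG) (hΛspan : Submodule.span K (Λ : Set V) = ⊤)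
    (hΛself : ∀ x ∈ Λ, ∀ y ∈ Λ, b x y ∈ (algebraMap R K).range) :
    -- then the image of `X ∩ Λ^∨` in `Λ^∨/Λ` is a lagrangian of the discriminant form:
    -- the preimage `(X ∩ Λ^∨) + Λ` coincides with the preimage of its orthogonal in `Λ^∨/Λ`
    ∀ v : V,
      (∃ x l : V, x ∈ X ∧ (∀ y ∈ Λ, b x y ∈ (algebraMap R K).range) ∧ l ∈ Λ ∧ v = x + l)
      ↔
      ((∀ y ∈ Λ, b v y ∈ (algebraMap R K).range) ∧
        ∀ w : V,
          (∃ x l : V, x ∈ X ∧ (∀ y ∈ Λ, b x y ∈ (algebraMap R K).range) ∧ l ∈ Λ ∧ w = x + l) →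
          b v w ∈ (algebraMap R K).range) := by
  have hεr : ∀ c ∈ (algebraMap R K).range, ε * c ∈ (algebraMap R K).range := by
    intro c hc
    rcases hε with h | h
    · rw [h, one_mul]; exact hc
    · rw [h, neg_one_mul]; exact neg_mem hc
  intro v
  constructor
  · rintro ⟨x, l, hx, hxd, hl, rfl⟩
    constructor
    · intro y hy
      rw [map_add, LinearMap.add_apply]
      exact add_mem (hxd y hy) (hΛself l hl y hy)
    · rintro w ⟨x', l', hx', hx'd, hl', rfl⟩
      have h1 : b x x' = 0 := (hXlag x).1 hx x' hx'
      have h2 : b x l' ∈ (algebraMap R K).range := hxd l' hl'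
      have h3 : b l x' ∈ (algebraMap R K).range := by
        rw [hbε l x']
        exact hεr _ (hx'd l hl)
      have h4 : b l l' ∈ (algebraMap R K).range := hΛself l hl l' hl'
      have : b (x + l) (x' + l') = b x x' + b x l' + b l x' + b l l' := by
        simp only [map_add, LinearMap.add_apply]; ring
      rw [this, h1, zero_add]
      exact add_mem (add_mem h2 h3) h4
  · rintro ⟨hvΛ, hvperp⟩
    -- transfer X to a K-submodule
    set XK : Submodule K V :=
      { carrier := (X : Set V)
        add_mem' := fun ha hb => X.add_mem ha hb
        zero_mem' := X.zero_mem
        smul_mem' := fun c x hx => hXK c x hx } with hXKdef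
    have hXKmem : ∀ w : V, w ∈ XK ↔ w ∈ X := fun w => Iff.rfl
    obtain ⟨x, hx, l, hl, hvxl⟩ :=
      aux_lagrangian_lattice b hbnd hε hbε XK hXlag (Λ.restrictScalars R) hΛfg hΛspan v
        (by
          intro x hx hxd
          have h1 : b v x ∈ (algebraMap R K).range :=
            hvperp x ⟨x, 0, hx, hxd, Λ.zero_mem, (add_zero x).symm⟩
          rw [hbε x v]
          exact hεr _ h1)
    refine ⟨x, l, hx, ?_, hl, hvxl⟩
    intro y hy
    have : b x y = b v y - b l y := by
      rw [hvxl, map_add, LinearMap.add_apply]; ring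
    rw [this]
    exact sub_mem (hvΛ y hy) (hΛself l hl y hy)
end

section
/- Assume that the quadratic extension E/E_0 is unramified (i.e. a uniformizer of E_0 remains a uniformizer of E). Then there exists λ ∈ E_0^× such that (E, b_λ) contains a unimodular O_K-lattice Λ that is an O_E-submodule of E; in particular, for every α ∈ E^× with α·σ(α) = 1, the lattice Λ is stable under multiplication by α. -/
open FractionalIdeal nonZeroDivisors


/-- If the quadratic extension `E/E₀` is unramified, then there is a `λ ∈ E₀^×` such that
`(E, b_λ)` contains a unimodular `O_K`-lattice which is an `O_E`-submodule of `E`; in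
particular this lattice is stable under multiplication by any `α ∈ E^×` with `α σ(α) = 1`. -/
theorem unimodular_lattice_exists_of_unramified
    {R : Type*} [CommRing R] [IsDomain R] [IsDiscreteValuationRing R]
    [IsAdicComplete (IsLocalRing.maximalIdeal R) R]
    {K : Type*} [Field K] [Algebra R K] [IsFractionRing R K]
    {E : Type*} [Field E] [Algebra K E] [FiniteDimensional K E] [Algebra.IsSeparable K E]
    {S : Type*} [CommRing S] [IsDomain S] [IsDiscreteValuationRing S]
    [Algebra R S] [Algebra S E] [IsFractionRing S E] [Algebra R E]
    [IsScalarTower R K E] [IsScalarTower R S E]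
    [Module.Finite R S] [NoZeroSMulDivisors R S] [IsIntegralClosure S R E]
    -- `σ` : a non-trivial `K`-linear involution of `E`, with fixed field `E₀`
    (σ : E ≃ₐ[K] E) (hσσ : ∀ x : E, σ (σ x) = x) (hσne : ∃ x : E, σ x ≠ x)
    -- `E/E₀` is unramified : some uniformizer of `O_{E₀}` is a uniformizer of `O_E`
    (hunram : ∃ p : S, Irreducible p ∧ σ (algebraMap S E p) = algebraMap S E p) :
    -- there is `λ ∈ E₀^×` and a unimodular `O_K`-lattice in `(E, b_λ)` which is an
    -- `O_E`-submodule of `E`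
    ∃ lam : E, lam ≠ 0 ∧ σ lam = lam ∧
      ∃ Λ : Submodule S E,
        (Λ.restrictScalars R).FG ∧
        Submodule.span K (Λ : Set E) = ⊤ ∧
        (∀ x : E, x ∈ Λ ↔ ∀ y ∈ Λ, Algebra.trace K E (lam * x * σ y) ∈ (algebraMap R K).range) ∧
        (∀ α : E, α ≠ 0 → α * σ α = 1 → ∀ x ∈ Λ, α * x ∈ Λ) := by
  classical
  obtain ⟨p, hp, hpfix⟩ := hunram
  have hSE : Function.Injective (algebraMap S E) := IsFractionRing.injective S E
  set pE := algebraMap S E p with hpEdef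
  have hpE0 : pE ≠ 0 := by
    simp only [hpEdef, ne_eq, map_eq_zero_iff _ hSE]
    exact hp.ne_zero
  -- σ maps the image of S into itself
  have hσint : ∀ y : E, (∃ s : S, algebraMap S E s = y) → ∃ s : S, algebraMap S E s = σ y := by
    rintro y ⟨s, rfl⟩
    have hint : IsIntegral R (algebraMap S E s) := (IsIntegralClosure.isIntegral R E s).algebraMap
    have : IsIntegral R (σ (algebraMap S E s)) :=
      hint.map (σ.toAlgHom.restrictScalars R)
    exact IsIntegralClosure.isIntegral_iff.mp this
  -- the dual fractional ideal
  have hone : (1 : FractionalIdeal S⁰ E) ≠ 0 := by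
    intro h
    have h1 : (1 : E) ∈ (0 : FractionalIdeal S⁰ E) := h ▸ one_mem_one _
    rw [mem_zero_iff] at h1
    exact one_ne_zero h1
  set D := dual R K (1 : FractionalIdeal S⁰ E) with hDdef
  have hD0 : D ≠ 0 := dual_ne_zero R K hone
  set g := Submodule.IsPrincipal.generator (D : Submodule S E) with hgdef
  have hDg : D = spanSingleton S⁰ g := eq_spanSingleton_of_principal D
  have hg0 : g ≠ 0 := by
    intro h
    rw [h, spanSingleton_zero] at hDg
    exact hD0 hDg
  obtain ⟨a, b, hb, hab⟩ := IsFractionRing.div_surjective (A := S) g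
  have hbne : (b : S) ≠ 0 := nonZeroDivisors.ne_zero hb
  have hbE0 : algebraMap S E b ≠ 0 := fun h => hbne (hSE (by simpa using h))
  have hane : a ≠ 0 := by
    intro h
    rw [h, _root_.map_zero, zero_div] at hab
    exact hg0 hab.symm
  obtain ⟨i, u₁, hu₁⟩ := IsDiscreteValuationRing.eq_unit_mul_pow_irreducible hane hp
  obtain ⟨j, u₂, hu₂⟩ := IsDiscreteValuationRing.eq_unit_mul_pow_irreducible hbne hp
  refine ⟨pE ^ i / pE ^ j, ?_, ?_, (1 : Submodule S E), ?_, ?_, ?_, ?_⟩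
  · exact div_ne_zero (pow_ne_zero _ hpE0) (pow_ne_zero _ hpE0)
  · rw [map_div₀, map_pow, map_pow, hpfix]
  · -- FG over R
    have : (1 : Submodule S E).restrictScalars R =
        Submodule.map ((Algebra.linearMap S E).restrictScalars R) ⊤ := by
      ext z
      simp [Submodule.mem_one]
    rw [this]
    exact (Module.Finite.fg_top (R := R) (M := S)).map _
  · -- spans E over K
    rw [eq_top_iff]
    rintro e -
    have halg : IsAlgebraic R e :=
      (IsFractionRing.isAlgebraic_iff R K E).mpr (Algebra.IsAlgebraic.isAlgebraic e)
    have hRE : Function.Injective (algebraMap R E) := by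
      rw [IsScalarTower.algebraMap_eq R K E]
      exact (algebraMap K E).injective.comp (IsFractionRing.injective R K)
    obtain ⟨x, y, hy0, hxy⟩ : ∃ x : integralClosure R E, ∃ y ≠ (0 : R), algebraMap R E y * e = x := by
      obtain ⟨y, hy0, hint⟩ := halg.exists_integral_multiple
      exact ⟨⟨y • e, hint⟩, y, hy0, by show _ = y • e; rw [Algebra.smul_def]⟩
    obtain ⟨s, hs⟩ := IsIntegralClosure.isIntegral_iff (A := S).mp x.2
    have hyK : algebraMap R K y ≠ 0 := fun h => hy0 (IsFractionRing.injective R K (by simpa using h))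
    have hyE : algebraMap K E (algebraMap R K y) ≠ 0 := by simpa using hyK
    have he : e = (algebraMap R K y)⁻¹ • (algebraMap S E s) := by
      rw [Algebra.smul_def, map_inv₀, hs, ← hxy, IsScalarTower.algebraMap_apply R K E,
        ← mul_assoc, inv_mul_cancel₀ hyE, one_mul]
    rw [he]
    exact Submodule.smul_mem _ _ (Submodule.subset_span ((Submodule.mem_one).mpr ⟨s, rfl⟩))
  · -- unimodularity
    -- key : D = spanSingleton (pE^i / pE^j)
    have hspan : D = spanSingleton S⁰ (pE ^ i / pE ^ j) := by
      rw [hDg]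
      rw [spanSingleton_eq_spanSingleton (R := S)]
      refine ⟨u₂ * u₁⁻¹, ?_⟩
      have hA2' : algebraMap S E ((u₂ : S)) ≠ 0 := fun h => by
        exact u₂.ne_zero (hSE (by simpa using h))
      rw [Units.smul_def, Algebra.smul_def, ← hab, hu₁, hu₂, Units.val_mul,
        _root_.map_mul, _root_.map_mul, _root_.map_mul, _root_.map_pow, _root_.map_pow]
      set A1' := algebraMap S E ((u₁⁻¹ : Sˣ) : S) with hA1'def
      have h1 : A1' * algebraMap S E ((u₁ : S)) = 1 := by
        rw [hA1'def, ← _root_.map_mul, Units.inv_mul, _root_.map_one]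
      have hp0 : algebraMap S E p ≠ 0 := hpE0
      field_simp
      linear_combination (pE ^ i * pE ^ j) * h1

    -- membership criterion
    have key : ∀ x : E, x ∈ (1 : Submodule S E) ↔ (pE ^ i / pE ^ j) * x ∈ D := by
      intro x
      rw [hspan, mem_spanSingleton]
      constructor
      · rintro hx
        obtain ⟨s, rfl⟩ := (Submodule.mem_one).mp hx
        exact ⟨s, by rw [Algebra.smul_def]; ring⟩
      · rintro ⟨z, hz⟩
        rw [Algebra.smul_def] at hz
        have : algebraMap S E z = x := by
          have h0 : (pE ^ i / pE ^ j) ≠ 0 := div_ne_zero (pow_ne_zero _ hpE0) (pow_ne_zero _ hpE0)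
          have h2 : (pE ^ i / pE ^ j) * algebraMap S E z = (pE ^ i / pE ^ j) * x := by
            rw [← hz]; ring
          exact mul_left_cancel₀ h0 h2
        exact (Submodule.mem_one).mpr ⟨z, this⟩
    intro x
    rw [key x, mem_dual hone]
    constructor
    · intro h y hy
      have hσy : σ y ∈ (1 : Submodule S E) := by
        obtain ⟨s, hs⟩ := (Submodule.mem_one).mp hy
        obtain ⟨t, ht⟩ := hσint y ⟨s, hs⟩
        exact (Submodule.mem_one).mpr ⟨t, ht⟩
      have := h (σ y) (by
        obtain ⟨t, ht⟩ := (Submodule.mem_one).mp hσy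
        exact (mem_one_iff S⁰).mpr ⟨t, ht⟩)
      simpa [Algebra.traceForm_apply, mul_assoc] using this
    · intro h a ha
      obtain ⟨s, hs⟩ := (mem_one_iff S⁰).mp ha
      have hσa : σ a ∈ (1 : Submodule S E) := by
        obtain ⟨t, ht⟩ := hσint a ⟨s, hs⟩
        exact (Submodule.mem_one).mpr ⟨t, ht⟩
      have := h (σ a) hσa
      rw [hσσ a] at this
      simpa [Algebra.traceForm_apply, mul_assoc] using this
  · -- stability under norm-one units
    intro α hα0 hα1 x hx
    have hmem : ∃ s : S, algebraMap S E s = α := by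
      rcases ValuationRing.isInteger_or_isInteger S α with h | h
      · exact h
      · obtain ⟨s, hs⟩ := h
        have hinv : α⁻¹ = σ α := inv_eq_of_mul_eq_one_right hα1
        have : σ α⁻¹ = α := by rw [hinv, hσσ]
        obtain ⟨t, ht⟩ := hσint α⁻¹ ⟨s, hs⟩
        exact ⟨t, by rw [ht, this]⟩
    obtain ⟨s, rfl⟩ := hmem
    obtain ⟨t, rfl⟩ := (Submodule.mem_one).mp hx
    exact (Submodule.mem_one).mpr ⟨s * t, by rw [_root_.map_mul]⟩
end
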